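/- arXiv:1405.4247 — 7 statements merged into one kernel-verified Lean document; each statement's English description precedes it below -/
import Mathlib

section
/- Every mixed interval graph is an interval graph: if a graph G has a representation assigning to each vertex a nonempty real interval (open, closed, or half-open) such that two vertices are adjacent iff their intervals intersect, then G has such a representation using only closed intervals. -/
open Classical in
lemma mem_char_aux (a b : ℝ) (s : Set ℝ)
    (hs : s = Set.Icc a b ∨ s = Set.Ico a b ∨ s = Set.Ioc a b ∨ s = Set.Ioo a b)
    (hne : s.Nonempty) (x : ℝ) :
    x ∈ s ↔ ((if a ∈ s then a ≤ x else a < x) ∧ (if b ∈ s then x ≤ b else x < b)) := by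
  rcases hs with h|h|h|h <;> subst h <;> obtain ⟨y, hy⟩ := hne <;>
    simp only [Set.mem_Icc, Set.mem_Ico, Set.mem_Ioc, Set.mem_Ioo] at hy ⊢
  · have hab : a ≤ b := hy.1.trans hy.2
    simp [hab]
  · have hab : a < b := lt_of_le_of_lt hy.1 hy.2
    simp [hab, hab.le, lt_irrefl]
  · have hab : a < b := lt_of_lt_of_le hy.1 hy.2
    simp [hab, hab.le, lt_irrefl]
  · have hab : a < b := hy.1.trans hy.2
    simp [lt_irrefl]

/-- Every mixed interval graph is an interval graph. -/
theorem mixed_interval_graph_is_interval_graph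
    {V : Type*} [Fintype V] (G : SimpleGraph V) (I : V → Set ℝ)
    (hform : ∀ v, ∃ a b : ℝ,
      I v = Set.Icc a b ∨ I v = Set.Ico a b ∨ I v = Set.Ioc a b ∨ I v = Set.Ioo a b)
    (hne : ∀ v, (I v).Nonempty)
    (hadj : ∀ u v : V, u ≠ v → (G.Adj u v ↔ (I u ∩ I v).Nonempty)) :
    ∃ L R : V → ℝ, (∀ v, L v ≤ R v) ∧
      ∀ u v : V, u ≠ v →
        (G.Adj u v ↔ (Set.Icc (L u) (R u) ∩ Set.Icc (L v) (R v)).Nonempty) := by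
  classical
  choose a b hI using hform
  set S : Finset ℝ := Finset.univ.image a ∪ Finset.univ.image b with hSdef
  have haS : ∀ v, a v ∈ S := fun v =>
    Finset.mem_union_left _ (Finset.mem_image_of_mem a (Finset.mem_univ v))
  have hbS : ∀ v, b v ∈ S :=
    fun v => Finset.mem_union_right _ (Finset.mem_image_of_mem b (Finset.mem_univ v))
  set gaps : Finset ℝ :=
    ((S ×ˢ S).filter (fun p => p.1 < p.2)).image (fun p => (p.2 - p.1) / 3) with hgdef
  set ε : ℝ := if h : gaps.Nonempty then gaps.min' h else 1 with hεdef
  have hεpos : 0 < ε := by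
    rw [hεdef]; split_ifs with h
    · obtain ⟨p, hp, hpe⟩ := Finset.mem_image.mp (gaps.min'_mem h)
      have hlt : p.1 < p.2 := (Finset.mem_filter.mp hp).2
      rw [← hpe]; linarith
    · norm_num
  have hgap : ∀ x ∈ S, ∀ y ∈ S, x < y → x + 2 * ε ≤ y := by
    intro x hx y hy hxy
    have hmemg : (y - x) / 3 ∈ gaps := by
      rw [hgdef]
      exact Finset.mem_image.mpr ⟨(x, y),
        Finset.mem_filter.mpr ⟨Finset.mem_product.mpr ⟨hx, hy⟩, hxy⟩, rfl⟩
    have hne' : gaps.Nonempty := ⟨_, hmemg⟩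
    have hle : ε ≤ (y - x) / 3 := by
      rw [hεdef, dif_pos hne']; exact Finset.min'_le _ _ hmemg
    linarith
  set L : V → ℝ := fun v => a v + (if a v ∈ I v then 0 else ε) with hLdef
  set R : V → ℝ := fun v => b v - (if b v ∈ I v then 0 else ε) with hRdef
  have hmem : ∀ v x, x ∈ I v ↔
      ((if a v ∈ I v then a v ≤ x else a v < x) ∧
       (if b v ∈ I v then x ≤ b v else x < b v)) :=
    fun v x => mem_char_aux _ _ _ (hI v) (hne v) x
  have key : ∀ u v x, x ∈ I u → x ∈ I v → L u ≤ R v := by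
    intro u v x hxu hxv
    have h1 := ((hmem u x).mp hxu).1
    have h2 := ((hmem v x).mp hxv).2
    rw [hLdef, hRdef]
    by_cases cu : a u ∈ I u <;> by_cases cv : b v ∈ I v <;>
      simp only [cu, cv, if_true, if_false, eq_self_iff_true] at h1 h2 ⊢
    · simp only [add_zero, sub_zero]; exact h1.trans h2
    · have := hgap (a u) (haS u) (b v) (hbS v) (lt_of_le_of_lt h1 h2); linarith
    · have := hgap (a u) (haS u) (b v) (hbS v) (lt_of_lt_of_le h1 h2); linarith
    · have := hgap (a u) (haS u) (b v) (hbS v) (h1.trans h2); linarith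
  have hLR : ∀ v, L v ≤ R v := by
    intro v
    obtain ⟨x, hx⟩ := hne v
    exact key v v x hx hx
  have hsub : ∀ v, Set.Icc (L v) (R v) ⊆ I v := by
    intro v x hx
    obtain ⟨hx1, hx2⟩ := Set.mem_Icc.mp hx
    rw [hLdef] at hx1; rw [hRdef] at hx2
    rw [hmem]
    constructor
    · split_ifs with h
      · simp only [h, if_true] at hx1; linarith
      · simp only [h, if_false] at hx1; linarith
    · split_ifs with h
      · simp only [h, if_true] at hx2; linarith
      · simp only [h, if_false] at hx2; linarith
  refine ⟨L, R, hLR, fun u v huv => ?_⟩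
  rw [hadj u v huv]
  constructor
  · rintro ⟨x, hxu, hxv⟩
    exact ⟨max (L u) (L v),
      Set.mem_Icc.mpr ⟨le_max_left _ _, max_le (hLR u) (key v u x hxv hxu)⟩,
      Set.mem_Icc.mpr ⟨le_max_right _ _, max_le (key u v x hxu hxv) (hLR v)⟩⟩
  · rintro ⟨x, hx1, hx2⟩
    exact ⟨x, hsub u hx1, hsub v hx2⟩
end

section
/- K_{1,4} is not a unit mixed interval graph: there is no assignment of length-1 real intervals (with each endpoint open or closed) to the five vertices of K_{1,4} such that adjacency coincides with interval intersection. -/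
/-- A set is a unit mixed interval: a real interval of length 1, each endpoint
open or closed. -/
def IsUnitMixedInterval (s : Set ℝ) : Prop :=
  ∃ x : ℝ, s = Set.Icc x (x + 1) ∨ s = Set.Ico x (x + 1) ∨
    s = Set.Ioc x (x + 1) ∨ s = Set.Ioo x (x + 1)

lemma umi_bounds {s : Set ℝ} {x : ℝ}
    (h : s = Set.Icc x (x + 1) ∨ s = Set.Ico x (x + 1) ∨
      s = Set.Ioc x (x + 1) ∨ s = Set.Ioo x (x + 1)) :
    Set.Ioo x (x + 1) ⊆ s ∧ s ⊆ Set.Icc x (x + 1) := by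
  rcases h with h | h | h | h <;> subst h
  · exact ⟨Set.Ioo_subset_Icc_self, subset_rfl⟩
  · exact ⟨Set.Ioo_subset_Ico_self, Set.Ico_subset_Icc_self⟩
  · exact ⟨Set.Ioo_subset_Ioc_self, Set.Ioc_subset_Icc_self⟩
  · exact ⟨subset_rfl, Set.Ioo_subset_Icc_self⟩

lemma umi_near {s t : Set ℝ} {x y : ℝ}
    (hs : s = Set.Icc x (x + 1) ∨ s = Set.Ico x (x + 1) ∨
      s = Set.Ioc x (x + 1) ∨ s = Set.Ioo x (x + 1))
    (ht : t = Set.Icc y (y + 1) ∨ t = Set.Ico y (y + 1) ∨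
      t = Set.Ioc y (y + 1) ∨ t = Set.Ioo y (y + 1))
    (h : (s ∩ t).Nonempty) : x ≤ y + 1 ∧ y ≤ x + 1 := by
  obtain ⟨z, hzs, hzt⟩ := h
  have h1 := (umi_bounds hs).2 hzs
  have h2 := (umi_bounds ht).2 hzt
  rw [Set.mem_Icc] at h1 h2
  exact ⟨by linarith [h1.1, h2.2], by linarith [h2.1, h1.2]⟩

lemma umi_far {s t : Set ℝ} {x y : ℝ}
    (hs : s = Set.Icc x (x + 1) ∨ s = Set.Ico x (x + 1) ∨
      s = Set.Ioc x (x + 1) ∨ s = Set.Ioo x (x + 1))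
    (ht : t = Set.Icc y (y + 1) ∨ t = Set.Ico y (y + 1) ∨
      t = Set.Ioc y (y + 1) ∨ t = Set.Ioo y (y + 1))
    (h : ¬ (s ∩ t).Nonempty) : x + 1 ≤ y ∨ y + 1 ≤ x := by
  by_contra hc
  push_neg at hc
  obtain ⟨h1, h2⟩ := hc
  have hm : max x y < min x y + 1 := by
    rcases le_total x y with hxy | hxy
    · rw [max_eq_right hxy, min_eq_left hxy]; linarith
    · rw [max_eq_left hxy, min_eq_right hxy]; linarith
  set z := (max x y + (min x y + 1)) / 2 with hz
  have hz1 : max x y < z := by rw [hz]; linarith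
  have hz2 : z < min x y + 1 := by rw [hz]; linarith
  have hzs : z ∈ s := (umi_bounds hs).1
    ⟨lt_of_le_of_lt (le_max_left x y) hz1,
     lt_of_lt_of_le hz2 (by linarith [min_le_left x y])⟩
  have hzt : z ∈ t := (umi_bounds ht).1
    ⟨lt_of_le_of_lt (le_max_right x y) hz1,
     lt_of_lt_of_le hz2 (by linarith [min_le_right x y])⟩
  exact h ⟨z, hzs, hzt⟩

/-- The star `K_{1,4}` (center `0`, leaves `1,2,3,4`) is not a unit mixed
interval graph. -/
theorem K14_not_unit_mixed_interval_graph :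
    ¬ ∃ I : Fin 5 → Set ℝ, (∀ i, IsUnitMixedInterval (I i)) ∧
      ∀ i j : Fin 5, i ≠ j → ((i = 0 ∨ j = 0) ↔ (I i ∩ I j).Nonempty) := by
  rintro ⟨I, hunit, hadj⟩
  obtain ⟨x0, h0⟩ := hunit 0
  obtain ⟨x1, h1⟩ := hunit 1
  obtain ⟨x2, h2⟩ := hunit 2
  obtain ⟨x3, h3⟩ := hunit 3
  obtain ⟨x4, h4⟩ := hunit 4
  have n1 := umi_near h0 h1 ((hadj 0 1 (by decide)).1 (Or.inl rfl))
  have n2 := umi_near h0 h2 ((hadj 0 2 (by decide)).1 (Or.inl rfl))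
  have n3 := umi_near h0 h3 ((hadj 0 3 (by decide)).1 (Or.inl rfl))
  have n4 := umi_near h0 h4 ((hadj 0 4 (by decide)).1 (Or.inl rfl))
  have f12 := umi_far h1 h2 fun hne => absurd ((hadj 1 2 (by decide)).2 hne) (by decide)
  have f13 := umi_far h1 h3 fun hne => absurd ((hadj 1 3 (by decide)).2 hne) (by decide)
  have f14 := umi_far h1 h4 fun hne => absurd ((hadj 1 4 (by decide)).2 hne) (by decide)
  have f23 := umi_far h2 h3 fun hne => absurd ((hadj 2 3 (by decide)).2 hne) (by decide)
  have f24 := umi_far h2 h4 fun hne => absurd ((hadj 2 4 (by decide)).2 hne) (by decide)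
  have f34 := umi_far h3 h4 fun hne => absurd ((hadj 3 4 (by decide)).2 hne) (by decide)
  obtain ⟨na1, nb1⟩ := n1
  obtain ⟨na2, nb2⟩ := n2
  obtain ⟨na3, nb3⟩ := n3
  obtain ⟨na4, nb4⟩ := n4
  rcases f12 with f12 | f12 <;> rcases f13 with f13 | f13 <;>
    rcases f14 with f14 | f14 <;> rcases f23 with f23 | f23 <;>
    rcases f24 with f24 | f24 <;> rcases f34 with f34 | f34 <;> linarith
end

section
/- In any unit mixed interval representation of K_{1,3} with center c and leaves u, v, w, some leaf's interval shares an endpoint with the center's interval at a point where one interval is open and the other closed. More precisely, there exists a leaf x such that I(x) ∩ I(c) is a single point or the closures of I(x) and I(c) meet only at a common endpoint. -/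
/-- `s` is a unit interval (each endpoint open or closed) with left endpoint `x`. -/
def UnitIntervalAt (s : Set ℝ) (x : ℝ) : Prop :=
  s = Set.Icc x (x + 1) ∨ s = Set.Ico x (x + 1) ∨
    s = Set.Ioc x (x + 1) ∨ s = Set.Ioo x (x + 1)

/-- In any unit mixed interval representation of the claw `K_{1,3}` (center `0`,
leaves `1,2,3`), some leaf's interval meets the center's interval in a single
point, or the closures of the two intervals meet only at a point that is a
common endpoint of both. -/
theorem claw_unit_mixed_leaf_endpoint
    (a : Fin 4 → ℝ) (I : Fin 4 → Set ℝ)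
    (hunit : ∀ i, UnitIntervalAt (I i) (a i))
    (hadj : ∀ i j : Fin 4, i ≠ j → ((i = 0 ∨ j = 0) ↔ (I i ∩ I j).Nonempty)) :
    ∃ x : Fin 4, x ≠ 0 ∧
      ((∃ p : ℝ, I x ∩ I 0 = {p}) ∨
       (∃ p : ℝ, Set.Icc (a x) (a x + 1) ∩ Set.Icc (a 0) (a 0 + 1) = {p} ∧
          (p = a x ∨ p = a x + 1) ∧ (p = a 0 ∨ p = a 0 + 1))) := by
  have hsub : ∀ i, I i ⊆ Set.Icc (a i) (a i + 1) := by
    intro i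
    rcases hunit i with h | h | h | h <;> rw [h] <;>
      first
        | exact subset_rfl
        | exact Set.Ico_subset_Icc_self
        | exact Set.Ioc_subset_Icc_self
        | exact Set.Ioo_subset_Icc_self
  have hsup : ∀ i, Set.Ioo (a i) (a i + 1) ⊆ I i := by
    intro i
    rcases hunit i with h | h | h | h <;> rw [h] <;>
      first
        | exact subset_rfl
        | exact Set.Ioo_subset_Icc_self
        | exact Set.Ioo_subset_Ico_self
        | exact Set.Ioo_subset_Ioc_self
  have hnear : ∀ i : Fin 4, i ≠ 0 → a 0 ≤ a i + 1 ∧ a i ≤ a 0 + 1 := by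
    intro i hi
    obtain ⟨p, hpi, hp0⟩ := (hadj i 0 hi).mp (Or.inr rfl)
    have h1 := hsub i hpi
    have h2 := hsub 0 hp0
    simp only [Set.mem_Icc] at h1 h2
    constructor <;> linarith [h1.1, h1.2, h2.1, h2.2]
  have hfar : ∀ i j : Fin 4, i ≠ j → i ≠ 0 → j ≠ 0 →
      a j ≥ a i + 1 ∨ a i ≥ a j + 1 := by
    intro i j hij hi hj
    by_contra hcon
    push_neg at hcon
    obtain ⟨h1, h2⟩ := hcon
    have hne : ¬ (I i ∩ I j).Nonempty := by
      intro h
      rcases (hadj i j hij).mpr h with h' | h'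
      · exact hi h'
      · exact hj h'
    exact hne ⟨(a i + a j + 1) / 2, hsup i ⟨by linarith, by linarith⟩,
      hsup j ⟨by linarith, by linarith⟩⟩
  have key : ∃ x : Fin 4, x ≠ 0 ∧ (a x + 1 = a 0 ∨ a x = a 0 + 1) := by
    have h1 := hnear 1 (by decide)
    have h2 := hnear 2 (by decide)
    have h3 := hnear 3 (by decide)
    have h12 := hfar 1 2 (by decide) (by decide) (by decide)
    have h13 := hfar 1 3 (by decide) (by decide) (by decide)
    have h23 := hfar 2 3 (by decide) (by decide) (by decide)
    by_contra hc
    push_neg at hc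
    have c1 := hc 1 (by decide)
    have c2 := hc 2 (by decide)
    have c3 := hc 3 (by decide)
    have s1 : a 0 < a 1 + 1 := lt_of_le_of_ne h1.1 (Ne.symm c1.1)
    have t1 : a 1 < a 0 + 1 := lt_of_le_of_ne h1.2 c1.2
    have s2 : a 0 < a 2 + 1 := lt_of_le_of_ne h2.1 (Ne.symm c2.1)
    have t2 : a 2 < a 0 + 1 := lt_of_le_of_ne h2.2 c2.2
    have s3 : a 0 < a 3 + 1 := lt_of_le_of_ne h3.1 (Ne.symm c3.1)
    have t3 : a 3 < a 0 + 1 := lt_of_le_of_ne h3.2 c3.2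
    rcases h12 with h | h <;> rcases h13 with h' | h' <;> rcases h23 with h'' | h'' <;>
      linarith
  obtain ⟨x, hx0, hcase⟩ := key
  refine ⟨x, hx0, Or.inr ?_⟩
  rcases hcase with h | h
  · refine ⟨a 0, ?_, Or.inr h.symm, Or.inl rfl⟩
    ext y
    simp only [Set.mem_inter_iff, Set.mem_Icc, Set.mem_singleton_iff]
    constructor
    · rintro ⟨⟨_, hy2⟩, hy3, _⟩
      linarith
    · rintro rfl
      refine ⟨⟨by linarith, by linarith⟩, le_refl _, by linarith⟩
  · refine ⟨a 0 + 1, ?_, Or.inl h.symm, Or.inr rfl⟩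
    ext y
    simp only [Set.mem_inter_iff, Set.mem_Icc, Set.mem_singleton_iff]
    constructor
    · rintro ⟨⟨hy1, _⟩, _, hy4⟩
      linarith
    · rintro rfl
      refine ⟨⟨by linarith, by linarith⟩, by linarith, le_refl _⟩
end

section
/- Every twin-free interval graph G has a closed interval representation with all endpoints distinct in which, for each strict containment I(u) ⊂ I(v), there exist vertices x and y such that x peeks into vu from the left and y peeks into vu from the right. -/
variable {V : Type*}

/-- `I(u)` is strictly contained in `I(v)`. -/
def StrictIn (L R : V → ℝ) (u v : V) : Prop := L v < L u ∧ R u < R v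

/-- `x` peeks into `vu` from the left (with `R x ≤ L u`). -/
def PeeksLeft (L R : V → ℝ) (x v u : V) : Prop :=
  (Set.Icc (L x) (R x) ∩ Set.Icc (L v) (R v)).Nonempty ∧
    Set.Icc (L x) (R x) ∩ Set.Icc (L u) (R u) = ∅ ∧ R x ≤ L u

/-- `x` peeks into `vu` from the right (with `R u ≤ L x`). -/
def PeeksRight (L R : V → ℝ) (x v u : V) : Prop :=
  (Set.Icc (L x) (R x) ∩ Set.Icc (L v) (R v)).Nonempty ∧
    Set.Icc (L x) (R x) ∩ Set.Icc (L u) (R u) = ∅ ∧ R u ≤ L x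

/-- All `2|V|` endpoints pairwise distinct. -/
def DistinctEnds (L R : V → ℝ) : Prop :=
  Function.Injective (fun p : V × Bool => if p.2 then R p.1 else L p.1)

/-- Closed interval representation of `G`. -/
def ClosedRep (G : SimpleGraph V) (L R : V → ℝ) : Prop :=
  (∀ v, L v ≤ R v) ∧
    ∀ u v : V, u ≠ v →
      (G.Adj u v ↔ (Set.Icc (L u) (R u) ∩ Set.Icc (L v) (R v)).Nonempty)

/-- `G` is twin-free: no two distinct vertices have the same closed
neighborhood. -/
def TwinFree (G : SimpleGraph V) : Prop :=
  ∀ u v : V, (∀ w, (G.Adj u w ∨ w = u) ↔ (G.Adj v w ∨ w = v)) → u = v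

/-!
Order the maximal cliques of `G` from left to right along a given interval representation
and replace each vertex `v` by the range `[lo v, hi v)` of indices of the maximal cliques
containing it. Twin-freeness makes `v ↦ (lo v, hi v)` injective, and since consecutive maximal
cliques are incomparable, every `lo u > 0` is some `hi x` and every `hi u` below the maximum is
some `lo y`. Realising these ranges by closed intervals whose ends break ties lexicographically
makes all endpoints distinct and forbids strict nesting of intervals sharing `lo` or `hi`; so a
strict containment `I(u) ⊂ I(v)` forces `lo v < lo u` and `hi u < hi v`, and then `x` and `y`
peek into `vu` from the left and from the right.
-/

open Finset

section General

variable {α : Type*} [LinearOrder α]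

theorem card_filter_lt_lt_card_filter_le_iff {s : Finset α} {x y : α} :
    #{t ∈ s | t < x} < #{t ∈ s | t ≤ y} ↔ ∃ t ∈ s, x ≤ t ∧ t ≤ y := by
  constructor
  · intro h
    obtain ⟨t, ht, hnt⟩ := exists_mem_notMem_of_card_lt_card h
    simp only [mem_filter, not_and, not_lt] at ht hnt
    exact ⟨t, ht.1, hnt ht.1, ht.2⟩
  · rintro ⟨t, ht, hxt, hty⟩
    refine card_lt_card ⟨monotone_filter_right s fun t' _ h => (h.trans_le (hxt.trans hty)).le, ?_⟩
    intro hsub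
    exact (hsub (mem_filter.2 ⟨ht, hty⟩) |> mem_filter.1).2.not_ge hxt

theorem exists_lt_of_card_filter_le_lt {s : Finset α} {x y : α}
    (h : #{t ∈ s | t ≤ x} < #{t ∈ s | t ≤ y}) : ∃ t ∈ s, x < t := by
  obtain ⟨t, ht, hnt⟩ := exists_mem_notMem_of_card_lt_card h
  simp only [mem_filter, not_and, not_le] at ht hnt
  exact ⟨t, ht.1, hnt ht.1⟩

theorem exists_consecutive_of_isLowerSet {s : Finset α} {P : Set α} (hP : IsLowerSet P)
    (h₁ : ∃ t ∈ s, t ∈ P) (h₂ : ∃ t ∈ s, t ∉ P) :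
    ∃ t₁ t₂, t₁ ∈ s ∧ t₂ ∈ s ∧ t₁ < t₂ ∧
      (∀ t ∈ s, t ∈ P ↔ t ≤ t₁) ∧ ∀ t ∈ s, t ≤ t₁ ∨ t₂ ≤ t := by
  classical
  have hne₁ : {t ∈ s | t ∈ P}.Nonempty := by simpa [Finset.Nonempty] using h₁
  have hne₂ : {t ∈ s | t ∉ P}.Nonempty := by simpa [Finset.Nonempty] using h₂
  obtain ⟨ht₁s, ht₁P⟩ := mem_filter.1 (max'_mem _ hne₁)
  obtain ⟨ht₂s, ht₂P⟩ := mem_filter.1 (min'_mem _ hne₂)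
  have below (t) (ht : t ∈ s) (htP : t ∈ P) : t ≤ max' _ hne₁ :=
    le_max' _ _ (mem_filter.2 ⟨ht, htP⟩)
  have above (t) (ht : t ∈ s) (htP : t ∉ P) : min' _ hne₂ ≤ t :=
    min'_le _ _ (mem_filter.2 ⟨ht, htP⟩)
  refine ⟨_, _, ht₁s, ht₂s, lt_of_not_ge fun h => ht₂P (hP h ht₁P),
    fun t ht => ⟨below t ht, fun h => hP h ht₁P⟩, fun t ht => ?_⟩
  by_cases htP : t ∈ P
  · exact .inl (below t ht htP)
  · exact .inr (above t ht htP)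

theorem Set.Icc_inter_Icc_nonempty_iff {a b c d : α}
    (hab : a ≤ b) (hcd : c ≤ d) : (Set.Icc a b ∩ Set.Icc c d).Nonempty ↔ a ≤ d ∧ c ≤ b := by
  simp only [Set.Icc_inter_Icc, Set.nonempty_Icc, sup_le_iff, le_inf_iff]
  tauto

theorem Int.mul_add_le_mul_add_iff {N m m' p q : ℤ} (hp : 0 ≤ p) (hpN : p < N) (hq : 0 ≤ q)
    (hqN : q < N) : m * N + p ≤ m' * N + q ↔ m < m' ∨ m = m' ∧ p ≤ q := by
  constructor
  · intro h
    by_contra! hc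
    rcases hc.1.lt_or_eq with hlt | rfl
    · nlinarith [mul_le_mul_of_nonneg_right (show m' + 1 ≤ m by omega) (hp.trans hpN.le)]
    · linarith [hc.2 rfl]
  · rintro (hlt | ⟨rfl, hle⟩)
    · nlinarith [mul_le_mul_of_nonneg_right (show m + 1 ≤ m' by omega) (hp.trans hpN.le)]
    · omega

end General

section CliquePoints

variable {α : Type*} [LinearOrder α]

def stab (L R : V → α) (t : α) : Set V := {v | L v ≤ t ∧ t ≤ R v}

theorem le_of_stab_subset {L R : V → α} (hLR : ∀ v, L v ≤ R v) {w : V} {t : α}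
    (h : stab L R (L w) ⊆ stab L R t) : L w ≤ t :=
  (h ⟨le_rfl, hLR w⟩).1

variable [Fintype V] (L R : V → α)

/-- One point per maximal clique `stab t`: the largest left end `t` at which it occurs. -/
noncomputable def cliquePoints : Finset α :=
  open Classical in {t ∈ univ.image L | ∀ w, stab L R t ⊆ stab L R (L w) → L w ≤ t}

/-- Numbering the clique points from `0` upwards, the clique points in `[L v, R v]` are those
with index in the half-open range `[cliqueStart v, cliqueEnd v)`. -/
noncomputable def cliqueStart (v : V) : ℕ := #{t ∈ cliquePoints L R | t < L v}

noncomputable def cliqueEnd (v : V) : ℕ := #{t ∈ cliquePoints L R | t ≤ R v}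

variable {L R}

theorem mem_cliquePoints {t : α} : t ∈ cliquePoints L R ↔
    (∃ w, L w = t) ∧ ∀ w, stab L R t ⊆ stab L R (L w) → L w ≤ t := by
  simp [cliquePoints]

theorem exists_mem_cliquePoints_stab_subset (w : V) :
    ∃ t ∈ cliquePoints L R, stab L R (L w) ⊆ stab L R t := by
  obtain ⟨w', hw', hmax⟩ := Set.exists_max_image {w' | stab L R (L w) ⊆ stab L R (L w')} L
    (Set.toFinite _) ⟨w, (subset_rfl : stab L R (L w) ⊆ _)⟩
  exact ⟨L w', mem_cliquePoints.2 ⟨⟨w', rfl⟩, fun w'' h => hmax w'' (hw'.trans h)⟩, hw'⟩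

theorem not_stab_subset_of_ne (hLR : ∀ v, L v ≤ R v) {t t' : α} (ht : t ∈ cliquePoints L R)
    (ht' : t' ∈ cliquePoints L R) (hne : t ≠ t') : ¬ stab L R t ⊆ stab L R t' := by
  intro h
  obtain ⟨⟨w, rfl⟩, hmax⟩ := mem_cliquePoints.1 ht
  obtain ⟨w', rfl⟩ := (mem_cliquePoints.1 ht').1
  exact hne (le_antisymm (le_of_stab_subset hLR h) (hmax w' h))

theorem exists_mem_cliquePoints_mem_stab (hLR : ∀ v, L v ≤ R v) (v : V) :
    ∃ t ∈ cliquePoints L R, L v ≤ t ∧ t ≤ R v := by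
  obtain ⟨t, ht, hsub⟩ := exists_mem_cliquePoints_stab_subset (L := L) (R := R) v
  exact ⟨t, ht, hsub ⟨le_rfl, hLR v⟩⟩

theorem exists_mem_cliquePoints_mem_stab_of_le (hLR : ∀ v, L v ≤ R v) {u v : V}
    (huv : L u ≤ L v) (hvu : L v ≤ R u) :
    ∃ t ∈ cliquePoints L R, u ∈ stab L R t ∧ v ∈ stab L R t := by
  obtain ⟨t, ht, hsub⟩ := exists_mem_cliquePoints_stab_subset (L := L) (R := R) v
  exact ⟨t, ht, hsub ⟨huv, hvu⟩, hsub ⟨le_rfl, hLR v⟩⟩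

theorem cliqueStart_lt_cliqueEnd_iff {u v : V} :
    cliqueStart L R v < cliqueEnd L R u ↔ ∃ t ∈ cliquePoints L R, L v ≤ t ∧ t ≤ R u :=
  card_filter_lt_lt_card_filter_le_iff

theorem cliqueStart_lt_cliqueEnd (hLR : ∀ v, L v ≤ R v) (v : V) :
    cliqueStart L R v < cliqueEnd L R v :=
  cliqueStart_lt_cliqueEnd_iff.2 (exists_mem_cliquePoints_mem_stab hLR v)

theorem cliqueStart_lt_cliqueEnd_and_iff (hLR : ∀ v, L v ≤ R v) {u v : V} :
    cliqueStart L R v < cliqueEnd L R u ∧ cliqueStart L R u < cliqueEnd L R v ↔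
      L v ≤ R u ∧ L u ≤ R v := by
  simp only [cliqueStart_lt_cliqueEnd_iff]
  constructor
  · rintro ⟨⟨t, -, hvt, htu⟩, ⟨t', -, hut', ht'v⟩⟩
    exact ⟨hvt.trans htu, hut'.trans ht'v⟩
  · rintro ⟨hvu, huv⟩
    obtain ⟨t, ht, hu, hv⟩ : ∃ t ∈ cliquePoints L R, u ∈ stab L R t ∧ v ∈ stab L R t := by
      rcases le_total (L u) (L v) with h | h
      · exact exists_mem_cliquePoints_mem_stab_of_le hLR h hvu
      · obtain ⟨t, ht, hv, hu⟩ := exists_mem_cliquePoints_mem_stab_of_le hLR h huv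
        exact ⟨t, ht, hu, hv⟩
    exact ⟨⟨t, ht, hv.1, hu.2⟩, ⟨t, ht, hu.1, hv.2⟩⟩

theorem exists_right_cut (hLR : ∀ v, L v ≤ R v) {P : Set α} (hP : IsLowerSet P)
    (h₁ : ∃ t ∈ cliquePoints L R, t ∈ P) (h₂ : ∃ t ∈ cliquePoints L R, t ∉ P) :
    ∃ x, ∀ t ∈ cliquePoints L R, t ≤ R x ↔ t ∈ P := by
  obtain ⟨t₁, t₂, ht₁, ht₂, hlt, hcut, hgap⟩ := exists_consecutive_of_isLowerSet hP h₁ h₂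
  obtain ⟨x, hx₁, hx₂⟩ := Set.not_subset.1 (not_stab_subset_of_ne hLR ht₁ ht₂ hlt.ne)
  have hRx : R x < t₂ := lt_of_not_ge fun h => hx₂ ⟨hx₁.1.trans hlt.le, h⟩
  refine ⟨x, fun t ht => ?_⟩
  rw [hcut t ht]
  exact ⟨fun h => (hgap t ht).resolve_right (h.trans_lt hRx).not_ge, fun h => h.trans hx₁.2⟩

theorem exists_left_cut (hLR : ∀ v, L v ≤ R v) {P : Set α} (hP : IsLowerSet P)
    (h₁ : ∃ t ∈ cliquePoints L R, t ∈ P) (h₂ : ∃ t ∈ cliquePoints L R, t ∉ P) :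
    ∃ y, ∀ t ∈ cliquePoints L R, t < L y ↔ t ∈ P := by
  obtain ⟨t₁, t₂, ht₁, ht₂, hlt, hcut, hgap⟩ := exists_consecutive_of_isLowerSet hP h₁ h₂
  obtain ⟨y, hy₂, hy₁⟩ := Set.not_subset.1 (not_stab_subset_of_ne hLR ht₂ ht₁ hlt.ne')
  have hLy : t₁ < L y := lt_of_not_ge fun h => hy₁ ⟨h, hlt.le.trans hy₂.2⟩
  refine ⟨y, fun t ht => ?_⟩
  rw [hcut t ht]
  exact ⟨fun h => (hgap t ht).resolve_right (h.trans_le hy₂.1).not_ge, fun h => h.trans_lt hLy⟩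

theorem exists_cliqueEnd_eq (hLR : ∀ v, L v ≤ R v) {u : V} (hu : 0 < cliqueStart L R u) :
    ∃ x, cliqueEnd L R x = cliqueStart L R u := by
  obtain ⟨t, ht⟩ := card_pos.1 hu
  obtain ⟨t', ht', hut', -⟩ := exists_mem_cliquePoints_mem_stab hLR u
  obtain ⟨x, hx⟩ := exists_right_cut hLR (isLowerSet_Iio (L u)) ⟨t, mem_filter.1 ht⟩
    ⟨t', ht', hut'.not_gt⟩
  exact ⟨x, congrArg card (filter_congr hx)⟩

theorem exists_cliqueStart_eq (hLR : ∀ v, L v ≤ R v) {u v : V}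
    (huv : cliqueEnd L R u < cliqueEnd L R v) : ∃ y, cliqueStart L R y = cliqueEnd L R u := by
  obtain ⟨t, ht, htu⟩ := exists_mem_cliquePoints_mem_stab hLR u
  obtain ⟨y, hy⟩ := exists_left_cut hLR (isLowerSet_Iic (R u)) ⟨t, ht, htu.2⟩
    (exists_lt_of_card_filter_le_lt huv |>.imp fun t' h => ⟨h.1, h.2.not_ge⟩)
  exact ⟨y, congrArg card (filter_congr hy)⟩

end CliquePoints

/-- `v` is modelled by the range `[lo v, hi v)` of indices of the maximal cliques containing it;
`exists_hi_eq` and `exists_lo_eq` say that consecutive maximal cliques are incomparable. -/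
structure NatIntervalModel (G : SimpleGraph V) where
  lo : V → ℕ
  hi : V → ℕ
  lo_lt_hi : ∀ v, lo v < hi v
  adj_iff : ∀ u v, u ≠ v → (G.Adj u v ↔ lo v < hi u ∧ lo u < hi v)
  injective : ∀ u v, lo u = lo v → hi u = hi v → u = v
  exists_hi_eq : ∀ u, 0 < lo u → ∃ x, hi x = lo u
  exists_lo_eq : ∀ u v, hi u < hi v → ∃ y, lo y = hi u

namespace NatIntervalModel

variable {G : SimpleGraph V} [Fintype V] (M : NatIntervalModel G)

def bound : ℤ := univ.sup M.hi + 1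

/-- The integer parts `4 lo - 2 < 4 hi - 3` order the ends as in the model; the fractional parts
(in base `bound`) break ties so that intervals sharing an end are never strictly nested. -/
def leftEnd (v : V) : ℝ := ((4 * M.lo v - 2) * M.bound + M.hi v : ℤ)

def rightEnd (v : V) : ℝ := ((4 * M.hi v - 3) * M.bound + M.lo v : ℤ)

theorem hi_lt_bound (v : V) : (M.hi v : ℤ) < M.bound := by
  have := le_sup (f := M.hi) (mem_univ v)
  unfold bound
  omega

theorem lo_lt_bound (v : V) : (M.lo v : ℤ) < M.bound := by
  have := M.hi_lt_bound v
  have := M.lo_lt_hi v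
  omega

theorem leftEnd_le_leftEnd_iff {v w : V} :
    M.leftEnd v ≤ M.leftEnd w ↔ M.lo v < M.lo w ∨ M.lo v = M.lo w ∧ M.hi v ≤ M.hi w := by
  rw [leftEnd, leftEnd, Int.cast_le, Int.mul_add_le_mul_add_iff (by positivity) (M.hi_lt_bound v)
    (by positivity) (M.hi_lt_bound w)]
  omega

theorem rightEnd_le_rightEnd_iff {v w : V} :
    M.rightEnd v ≤ M.rightEnd w ↔ M.hi v < M.hi w ∨ M.hi v = M.hi w ∧ M.lo v ≤ M.lo w := by
  rw [rightEnd, rightEnd, Int.cast_le, Int.mul_add_le_mul_add_iff (by positivity)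
    (M.lo_lt_bound v) (by positivity) (M.lo_lt_bound w)]
  omega

theorem leftEnd_le_rightEnd_iff {v w : V} : M.leftEnd v ≤ M.rightEnd w ↔ M.lo v < M.hi w := by
  rw [leftEnd, rightEnd, Int.cast_le, Int.mul_add_le_mul_add_iff (by positivity)
    (M.hi_lt_bound v) (by positivity) (M.lo_lt_bound w)]
  omega

theorem rightEnd_le_leftEnd_iff {v w : V} : M.rightEnd v ≤ M.leftEnd w ↔ M.hi v ≤ M.lo w := by
  rw [leftEnd, rightEnd, Int.cast_le, Int.mul_add_le_mul_add_iff (by positivity)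
    (M.lo_lt_bound v) (by positivity) (M.hi_lt_bound w)]
  omega

theorem leftEnd_le_rightEnd (v : V) : M.leftEnd v ≤ M.rightEnd v :=
  M.leftEnd_le_rightEnd_iff.2 (M.lo_lt_hi v)

theorem inter_nonempty_iff {v w : V} :
    (Set.Icc (M.leftEnd v) (M.rightEnd v) ∩ Set.Icc (M.leftEnd w) (M.rightEnd w)).Nonempty ↔
      M.lo v < M.hi w ∧ M.lo w < M.hi v := by
  rw [Set.Icc_inter_Icc_nonempty_iff (M.leftEnd_le_rightEnd v) (M.leftEnd_le_rightEnd w),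
    leftEnd_le_rightEnd_iff, leftEnd_le_rightEnd_iff]

theorem closedRep : ClosedRep G M.leftEnd M.rightEnd :=
  ⟨M.leftEnd_le_rightEnd, fun u v huv => by rw [M.adj_iff u v huv, inter_nonempty_iff, and_comm]⟩

theorem distinctEnds : DistinctEnds M.leftEnd M.rightEnd := by
  rintro ⟨v, _ | _⟩ ⟨w, _ | _⟩ h <;> simp only [Bool.false_eq_true, ite_false, ite_true] at h
  · have h₁ := M.leftEnd_le_leftEnd_iff.1 h.le
    have h₂ := M.leftEnd_le_leftEnd_iff.1 h.ge
    rw [M.injective v w (by omega) (by omega)]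
  · have h₁ := M.leftEnd_le_rightEnd_iff.1 h.le
    have h₂ := M.rightEnd_le_leftEnd_iff.1 h.ge
    omega
  · have h₁ := M.rightEnd_le_leftEnd_iff.1 h.le
    have h₂ := M.leftEnd_le_rightEnd_iff.1 h.ge
    omega
  · have h₁ := M.rightEnd_le_rightEnd_iff.1 h.le
    have h₂ := M.rightEnd_le_rightEnd_iff.1 h.ge
    rw [M.injective v w (by omega) (by omega)]

theorem lo_lt_lo_and_hi_lt_hi_of_strictIn {u v : V} (h : StrictIn M.leftEnd M.rightEnd u v) :
    M.lo v < M.lo u ∧ M.hi u < M.hi v := by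
  have hL := (not_congr M.leftEnd_le_leftEnd_iff).1 h.1.not_ge
  have hR := (not_congr M.rightEnd_le_rightEnd_iff).1 h.2.not_ge
  omega

theorem peeksLeft_iff {x v u : V} : PeeksLeft M.leftEnd M.rightEnd x v u ↔
    M.lo x < M.hi v ∧ M.lo v < M.hi x ∧ M.hi x ≤ M.lo u := by
  rw [PeeksLeft, ← Set.not_nonempty_iff_eq_empty, inter_nonempty_iff, inter_nonempty_iff,
    rightEnd_le_leftEnd_iff]
  omega

theorem peeksRight_iff {y v u : V} : PeeksRight M.leftEnd M.rightEnd y v u ↔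
    M.lo y < M.hi v ∧ M.lo v < M.hi y ∧ M.hi u ≤ M.lo y := by
  rw [PeeksRight, ← Set.not_nonempty_iff_eq_empty, inter_nonempty_iff, inter_nonempty_iff,
    rightEnd_le_leftEnd_iff]
  omega

theorem exists_peeksLeft {u v : V} (h : StrictIn M.leftEnd M.rightEnd u v) :
    ∃ x, PeeksLeft M.leftEnd M.rightEnd x v u := by
  obtain ⟨hlo, hhi⟩ := M.lo_lt_lo_and_hi_lt_hi_of_strictIn h
  obtain ⟨x, hx⟩ := M.exists_hi_eq u (by omega)
  have := M.lo_lt_hi x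
  have := M.lo_lt_hi u
  exact ⟨x, M.peeksLeft_iff.2 (by omega)⟩

theorem exists_peeksRight {u v : V} (h : StrictIn M.leftEnd M.rightEnd u v) :
    ∃ y, PeeksRight M.leftEnd M.rightEnd y v u := by
  obtain ⟨hlo, hhi⟩ := M.lo_lt_lo_and_hi_lt_hi_of_strictIn h
  obtain ⟨y, hy⟩ := M.exists_lo_eq u v hhi
  have := M.lo_lt_hi y
  have := M.lo_lt_hi u
  exact ⟨y, M.peeksRight_iff.2 (by omega)⟩

end NatIntervalModel

theorem TwinFree.eq_of_lo_eq_of_hi_eq {β : Type*} [Preorder β] {G : SimpleGraph V}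
    (htf : TwinFree G) {lo hi : V → β} (hlt : ∀ v, lo v < hi v)
    (hadj : ∀ u v, u ≠ v → (G.Adj u v ↔ lo v < hi u ∧ lo u < hi v)) {u v : V}
    (hlo : lo u = lo v) (hhi : hi u = hi v) : u = v := by
  have closedNbhd_iff (u w : V) : G.Adj u w ∨ w = u ↔ lo w < hi u ∧ lo u < hi w := by
    by_cases hwu : w = u
    · subst hwu
      simp [hlt w]
    · rw [hadj u w (Ne.symm hwu), or_iff_left hwu]
  exact htf u v fun w => by rw [closedNbhd_iff, closedNbhd_iff, hlo, hhi]

theorem ClosedRep.adj_iff_cliqueStart_lt_cliqueEnd [Fintype V] {G : SimpleGraph V}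
    {L R : V → ℝ} (h : ClosedRep G L R) {u v : V} (huv : u ≠ v) :
    G.Adj u v ↔ cliqueStart L R v < cliqueEnd L R u ∧ cliqueStart L R u < cliqueEnd L R v := by
  rw [h.2 u v huv, Set.Icc_inter_Icc_nonempty_iff (h.1 u) (h.1 v),
    cliqueStart_lt_cliqueEnd_and_iff h.1, and_comm]

noncomputable def NatIntervalModel.ofClosedRep [Fintype V] {G : SimpleGraph V} {L R : V → ℝ}
    (htf : TwinFree G) (h : ClosedRep G L R) : NatIntervalModel G where
  lo := cliqueStart L R
  hi := cliqueEnd L R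
  lo_lt_hi := cliqueStart_lt_cliqueEnd h.1
  adj_iff _ _ := h.adj_iff_cliqueStart_lt_cliqueEnd
  injective _ _ := htf.eq_of_lo_eq_of_hi_eq (cliqueStart_lt_cliqueEnd h.1)
    fun _ _ => h.adj_iff_cliqueStart_lt_cliqueEnd
  exists_hi_eq _ := exists_cliqueEnd_eq h.1
  exists_lo_eq _ _ := exists_cliqueStart_eq h.1

/-- Every twin-free interval graph has a closed interval representation with
distinct endpoints satisfying the inclusion property. -/
theorem twinfree_interval_graph_has_rep_with_inclusion_property
    [Fintype V] (G : SimpleGraph V) (htf : TwinFree G)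
    (hint : ∃ L R : V → ℝ, ClosedRep G L R) :
    ∃ L R : V → ℝ, ClosedRep G L R ∧ DistinctEnds L R ∧
      ∀ u v : V, StrictIn L R u v →
        (∃ x, PeeksLeft L R x v u) ∧ (∃ y, PeeksRight L R y v u) := by
  obtain ⟨L, R, hrep⟩ := hint
  let M := NatIntervalModel.ofClosedRep htf hrep
  exact ⟨M.leftEnd, M.rightEnd, M.closedRep, M.distinctEnds,
    fun _ _ h => ⟨M.exists_peeksLeft h, M.exists_peeksRight h⟩⟩
end

section
/- If a twin-free graph G has a strict mixed interval representation, then G has a unit mixed interval representation. -/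
variable {V : Type*}

/-- A unit mixed interval representation of `G`. -/
def UnitMixedRep (G : SimpleGraph V) (I : V → Set ℝ) : Prop :=
  (∀ v, ∃ x : ℝ, UnitIntervalAt (I v) x) ∧
    ∀ u v : V, u ≠ v → (G.Adj u v ↔ (I u ∩ I v).Nonempty)

namespace StrictMixedAux


/-- Membership characterization of a generalized interval. -/
def MemSpec (S : Set ℝ) (A B : ℝ) (l r : Prop) : Prop :=
  ∀ t, t ∈ S ↔ (A < t ∨ (t = A ∧ l)) ∧ (t < B ∨ (t = B ∧ r))

lemma memSpec_Icc {A B : ℝ} {l r : Prop} (h : A ≤ B) (hl : l) (hr : r) :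
    MemSpec (Set.Icc A B) A B l r := by
  intro t
  simp only [Set.mem_Icc]
  constructor
  · rintro ⟨h1, h2⟩
    exact ⟨h1.lt_or_eq.imp id fun e => ⟨e.symm, hl⟩,
      h2.lt_or_eq.imp id fun e => ⟨e, hr⟩⟩
  · rintro ⟨h1 | ⟨e1, _⟩, h2 | ⟨e2, _⟩⟩ <;> subst_vars <;> constructor <;> linarith

lemma memSpec_Ico {A B : ℝ} {l r : Prop} (hl : l) (hr : ¬r) :
    MemSpec (Set.Ico A B) A B l r := by
  intro t
  simp only [Set.mem_Ico]
  constructor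
  · rintro ⟨h1, h2⟩
    exact ⟨h1.lt_or_eq.imp id fun e => ⟨e.symm, hl⟩, Or.inl h2⟩
  · rintro ⟨h1 | ⟨e1, _⟩, h2 | ⟨e2, hr2⟩⟩ <;> first
      | (exact absurd hr2 hr)
      | (subst_vars; constructor <;> linarith)

lemma memSpec_Ioc {A B : ℝ} {l r : Prop} (hl : ¬l) (hr : r) :
    MemSpec (Set.Ioc A B) A B l r := by
  intro t
  simp only [Set.mem_Ioc]
  constructor
  · rintro ⟨h1, h2⟩
    exact ⟨Or.inl h1, h2.lt_or_eq.imp id fun e => ⟨e, hr⟩⟩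
  · rintro ⟨h1 | ⟨e1, hl1⟩, h2 | ⟨e2, _⟩⟩ <;> first
      | (exact absurd hl1 hl)
      | (subst_vars; constructor <;> linarith)

lemma memSpec_Ioo {A B : ℝ} {l r : Prop} (hl : ¬l) (hr : ¬r) :
    MemSpec (Set.Ioo A B) A B l r := by
  intro t
  simp only [Set.mem_Ioo]
  constructor
  · rintro ⟨h1, h2⟩
    exact ⟨Or.inl h1, Or.inl h2⟩
  · rintro ⟨h1 | ⟨e1, hl1⟩, h2 | ⟨e2, hr2⟩⟩ <;> first
      | (exact absurd hl1 hl)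
      | (exact absurd hr2 hr)
      | exact ⟨h1, h2⟩

lemma MemSpec.ne_char {S : Set ℝ} {A B : ℝ} {l r : Prop} (h : MemSpec S A B l r)
    (hne : S.Nonempty) : A < B ∨ (A = B ∧ l ∧ r) := by
  obtain ⟨t, ht⟩ := hne
  rw [h t] at ht
  obtain ⟨h1 | ⟨e1, hl1⟩, h2 | ⟨e2, hr2⟩⟩ := ht
  · exact Or.inl (lt_trans h1 h2)
  · exact Or.inl (by linarith [le_of_eq e2])
  · exact Or.inl (by linarith [le_of_eq e1])
  · exact Or.inr ⟨by rw [← e1, e2], hl1, hr2⟩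

lemma MemSpec.le {S : Set ℝ} {A B : ℝ} {l r : Prop} (h : MemSpec S A B l r)
    (hne : S.Nonempty) : A ≤ B := by
  rcases h.ne_char hne with h' | ⟨h', _⟩
  · exact h'.le
  · exact h'.le

lemma inter_nonempty_iff {S₁ S₂ : Set ℝ} {A₁ B₁ A₂ B₂ : ℝ} {l₁ r₁ l₂ r₂ : Prop}
    (h₁ : MemSpec S₁ A₁ B₁ l₁ r₁) (h₂ : MemSpec S₂ A₂ B₂ l₂ r₂)
    (ne₁ : S₁.Nonempty) (ne₂ : S₂.Nonempty) :
    (S₁ ∩ S₂).Nonempty ↔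
      (A₁ < B₂ ∨ (A₁ = B₂ ∧ l₁ ∧ r₂)) ∧ (A₂ < B₁ ∨ (A₂ = B₁ ∧ l₂ ∧ r₁)) := by
  have nc₁ := h₁.ne_char ne₁
  have nc₂ := h₂.ne_char ne₂
  constructor
  · rintro ⟨t, ht1, ht2⟩
    rw [h₁ t] at ht1; rw [h₂ t] at ht2
    obtain ⟨ha1, hb1⟩ := ht1
    obtain ⟨ha2, hb2⟩ := ht2
    constructor
    · rcases ha1 with ha1 | ⟨e1, hl1⟩ <;> rcases hb2 with hb2 | ⟨e2, hr2⟩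
      · exact Or.inl (lt_trans ha1 hb2)
      · exact Or.inl (e2 ▸ ha1)
      · exact Or.inl (e1 ▸ hb2)
      · exact Or.inr ⟨by rw [← e1, e2], hl1, hr2⟩
    · rcases ha2 with ha2 | ⟨e2, hl2⟩ <;> rcases hb1 with hb1 | ⟨e1, hr1⟩
      · exact Or.inl (lt_trans ha2 hb1)
      · exact Or.inl (e1 ▸ ha2)
      · exact Or.inl (e2 ▸ hb1)
      · exact Or.inr ⟨by rw [← e2, e1], hl2, hr1⟩
  · rintro ⟨h12, h21⟩
    rcases h12 with hlt12 | ⟨heq12, hl1, hr2⟩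
    · rcases h21 with hlt21 | ⟨heq21, hl2, hr1⟩
      · rcases nc₁ with hne1 | ⟨e1, hl1, hr1⟩
        · rcases nc₂ with hne2 | ⟨e2, hl2, hr2⟩
          · refine ⟨(max A₁ A₂ + min B₁ B₂) / 2, ?_, ?_⟩
            · rw [h₁]
              have h1 : A₁ ≤ max A₁ A₂ := le_max_left _ _
              have h2 : A₂ ≤ max A₁ A₂ := le_max_right _ _
              have h3 : min B₁ B₂ ≤ B₁ := min_le_left _ _
              have h4 : min B₁ B₂ ≤ B₂ := min_le_right _ _
              have h5 : max A₁ A₂ < min B₁ B₂ := by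
                rw [max_lt_iff, lt_min_iff, lt_min_iff]
                exact ⟨⟨hne1, hlt12⟩, ⟨hlt21, hne2⟩⟩
              exact ⟨Or.inl (by linarith), Or.inl (by linarith)⟩
            · rw [h₂]
              have h1 : A₁ ≤ max A₁ A₂ := le_max_left _ _
              have h2 : A₂ ≤ max A₁ A₂ := le_max_right _ _
              have h3 : min B₁ B₂ ≤ B₁ := min_le_left _ _
              have h4 : min B₁ B₂ ≤ B₂ := min_le_right _ _
              have h5 : max A₁ A₂ < min B₁ B₂ := by
                rw [max_lt_iff, lt_min_iff, lt_min_iff]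
                exact ⟨⟨hne1, hlt12⟩, ⟨hlt21, hne2⟩⟩
              exact ⟨Or.inl (by linarith), Or.inl (by linarith)⟩
          · refine ⟨A₂, ?_, ?_⟩
            · rw [h₁]
              exact ⟨Or.inl (by linarith [le_of_eq e2]), Or.inl hlt21⟩
            · rw [h₂]
              exact ⟨Or.inr ⟨rfl, hl2⟩, Or.inr ⟨e2, hr2⟩⟩
        · refine ⟨A₁, ?_, ?_⟩
          · rw [h₁]
            exact ⟨Or.inr ⟨rfl, hl1⟩, Or.inr ⟨e1, hr1⟩⟩
          · rw [h₂]
            exact ⟨Or.inl (by linarith [le_of_eq e1]), Or.inl (by linarith [le_of_eq e1])⟩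
      · refine ⟨A₂, ?_, ?_⟩
        · rw [h₁]
          refine ⟨?_, Or.inr ⟨heq21, hr1⟩⟩
          rcases nc₁ with hne1 | ⟨e1, hl1', _⟩
          · exact Or.inl (by rw [heq21]; exact hne1)
          · exact Or.inr ⟨heq21.trans e1.symm, hl1'⟩
        · rw [h₂]
          refine ⟨Or.inr ⟨rfl, hl2⟩, ?_⟩
          rcases nc₂ with hne2 | ⟨e2, _, hr2'⟩
          · exact Or.inl hne2
          · exact Or.inr ⟨e2, hr2'⟩
    · refine ⟨A₁, ?_, ?_⟩
      · rw [h₁]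
        refine ⟨Or.inr ⟨rfl, hl1⟩, ?_⟩
        rcases nc₁ with hne1 | ⟨e1, _, hr1⟩
        · exact Or.inl hne1
        · exact Or.inr ⟨e1, hr1⟩
      · rw [h₂]
        refine ⟨?_, Or.inr ⟨heq12, hr2⟩⟩
        rcases nc₂ with hne2 | ⟨e2, hl2, _⟩
        · exact Or.inl (by linarith [le_of_eq heq12])
        · exact Or.inr ⟨by rw [heq12, ← e2], hl2⟩



open Finset

/-- Strict order on endpoint pairs. -/
def Prec (q r : ℝ × ℝ) : Prop := q ≠ r ∧ q.1 ≤ r.1 ∧ q.2 ≤ r.2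

/-- The constraints that the new left endpoints must satisfy. -/
def Good (Rig : ℝ × ℝ → ℝ × ℝ → Prop) (s : Finset (ℝ × ℝ)) (X : ℝ × ℝ → ℝ) : Prop :=
  ∀ q ∈ s, ∀ r ∈ s, Prec q r →
    X q < X r ∧
    (r.1 < q.2 → X r < X q + 1) ∧
    (r.1 = q.2 → (Rig q r → X r = X q + 1) ∧ (¬Rig q r → X q + 1 < X r)) ∧
    (q.2 < r.1 → X q + 1 < X r)

lemma exists_X (PS : Finset (ℝ × ℝ)) (Rig : ℝ × ℝ → ℝ × ℝ → Prop)
    (hcomp : ∀ q ∈ PS, ∀ r ∈ PS, q ≠ r → Prec q r ∨ Prec r q)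
    (hRβ : ∀ q ∈ PS, ∀ r ∈ PS, q.2 = r.2 → q.1 < r.1 → ∀ s', ¬ Rig q s')
    (hRα : ∀ q ∈ PS, ∀ r ∈ PS, q.1 = r.1 → q.2 < r.2 → ∀ t, ¬ Rig t r) :
    ∃ X : ℝ × ℝ → ℝ, Good Rig PS X := by
  classical
  suffices H : ∀ n : ℕ, ∀ s : Finset (ℝ × ℝ), s ⊆ PS → s.card = n → ∃ X, Good Rig s X by
    exact H PS.card PS (le_refl _) rfl
  intro n
  induction n with
  | zero =>
    intro s _ hcard
    refine ⟨fun _ => 0, ?_⟩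
    intro q hq
    simp [Finset.card_eq_zero.mp hcard] at hq
  | succ n IH =>
    intro s hsub hcard
    have hsne : s.Nonempty := Finset.card_pos.mp (by omega)
    obtain ⟨m, hm, hmax⟩ := s.exists_max_image (fun p => p.1 + p.2) hsne
    set s' := s.erase m with hs'
    have hs'sub : s' ⊆ PS := fun p hp => hsub (Finset.mem_of_mem_erase hp)
    have hs'card : s'.card = n := by
      rw [hs', Finset.card_erase_of_mem hm, hcard]
      omega
    obtain ⟨X₀, hGood⟩ := IH s' hs'sub hs'card
    have hmPS : m ∈ PS := hsub hm
    have hPrec : ∀ p ∈ s', Prec p m := by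
      intro p hp
      have hpm : p ≠ m := Finset.ne_of_mem_erase hp
      have hpPS : p ∈ PS := hs'sub hp
      rcases hcomp p hpPS m hmPS hpm with h | h
      · exact h
      · exfalso
        have hsum := hmax p (Finset.mem_of_mem_erase hp)
        obtain ⟨_, h1, h2⟩ := h
        apply hpm
        have e1 : p.1 = m.1 := by linarith
        have e2 : p.2 = m.2 := by linarith
        exact Prod.ext e1 e2
    -- find the value ξ for m, together with its key properties
    have hξ : ∃ ξ : ℝ,
        (∀ q ∈ s', X₀ q < ξ) ∧
        (∀ q ∈ s', m.1 < q.2 → ξ < X₀ q + 1) ∧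
        (∀ q ∈ s', m.1 = q.2 → (Rig q m → ξ = X₀ q + 1) ∧ (¬Rig q m → X₀ q + 1 < ξ)) ∧
        (∀ q ∈ s', q.2 < m.1 → X₀ q + 1 < ξ) := by
      by_cases hEx : ∃ p ∈ s', p.2 = m.1 ∧ Rig p m
      · obtain ⟨rig, hrigm, hrig2, hrigR⟩ := hEx
        have hrigPS : rig ∈ PS := hs'sub hrigm
        refine ⟨X₀ rig + 1, ?_, ?_, ?_, ?_⟩
        · -- monotonicity
          intro q hq
          by_cases hqr : q = rig
          · subst hqr; linarith
          have hqPS : q ∈ PS := hs'sub hq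
          rcases hcomp q hqPS rig hrigPS hqr with h | h
          · have := (hGood q hq rig hrigm h).1; linarith
          · by_cases hq1 : q.1 < m.1
            · have := (hGood rig hrigm q hq h).2.1 (by rw [hrig2]; exact hq1)
              linarith
            · exfalso
              have hq1' : q.1 = m.1 := le_antisymm (hPrec q hq).2.1 (not_lt.mp hq1)
              have hq2 : q.2 < m.2 := by
                rcases lt_or_eq_of_le (hPrec q hq).2.2 with h' | h'
                · exact h'
                · exact absurd (Prod.ext hq1' h') (hPrec q hq).1
              exact hRα q hqPS m hmPS hq1' hq2 rig hrigR
        · -- overlap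
          intro q hq hover
          have hqPS : q ∈ PS := hs'sub hq
          have hne : rig ≠ q := by
            intro h; rw [h] at hrig2; rw [hrig2] at hover; exact lt_irrefl _ hover
          rcases hcomp rig hrigPS q hqPS hne with h | h
          · have := (hGood rig hrigm q hq h).1; linarith
          · exfalso
            have := h.2.2
            rw [hrig2] at this
            linarith
        · -- touch
          intro q hq htouch
          have hqPS : q ∈ PS := hs'sub hq
          constructor
          · intro hR
            by_cases hqr : q = rig
            · subst hqr; rfl
            · exfalso
              have hq2 : q.2 = rig.2 := by rw [hrig2, ← htouch]
              rcases lt_trichotomy q.1 rig.1 with h | h | h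
              · exact hRβ q hqPS rig hrigPS hq2 h m hR
              · exact hqr (Prod.ext h hq2)
              · exact hRβ rig hrigPS q hqPS hq2.symm h m hrigR
          · intro hR
            have hqr : q ≠ rig := fun h => hR (h ▸ hrigR)
            have hq2 : q.2 = rig.2 := by rw [hrig2, ← htouch]
            rcases lt_trichotomy q.1 rig.1 with h | h | h
            · have hPrec2 : Prec q rig := ⟨hqr, h.le, hq2.le⟩
              have := (hGood q hq rig hrigm hPrec2).1; linarith
            · exact absurd (Prod.ext h hq2) hqr
            · exact absurd (hRβ rig hrigPS q hqPS hq2.symm h m) (not_not.mpr hrigR)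
        · -- gap
          intro q hq hgap
          have hqPS : q ∈ PS := hs'sub hq
          have hne : q ≠ rig := by
            intro h; rw [h, hrig2] at hgap; exact lt_irrefl _ hgap
          rcases hcomp q hqPS rig hrigPS hne with h | h
          · have := (hGood q hq rig hrigm h).1; linarith
          · exfalso
            have := h.2.2
            rw [hrig2] at this
            linarith
      · -- non-rigid case
        push_neg at hEx
        by_cases hs'e : s' = ∅
        · exact ⟨0, by simp [hs'e]⟩
        have hs'ne : s'.Nonempty := Finset.nonempty_iff_ne_empty.mpr hs'e
        set f : ℝ × ℝ → ℝ := fun p => if p.2 ≤ m.1 then X₀ p + 1 else X₀ p with hf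
        set A := (s'.image f).max' (hs'ne.image f) with hA
        have hAub : ∀ q ∈ s', f q ≤ A := fun q hq =>
          Finset.le_max' _ _ (Finset.mem_image_of_mem f hq)
        set ups := s'.filter (fun p => m.1 < p.2) with hups
        set U := if h : ups.Nonempty then (ups.image (fun p => X₀ p + 1)).min' (h.image _)
          else A + 2 with hU
        have hUlb : ∀ q ∈ ups, U ≤ X₀ q + 1 := by
          intro q hq
          have hne : ups.Nonempty := ⟨q, hq⟩
          rw [hU, dif_pos hne]
          exact Finset.min'_le _ _ (Finset.mem_image_of_mem _ hq)
        have hAU : A < U := by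
          have key : ∀ p ∈ s', ∀ rr ∈ ups, f p < X₀ rr + 1 := by
            intro p hp rr hrr
            have hrr' : rr ∈ s' := Finset.mem_of_mem_filter rr hrr
            have hrr2 : m.1 < rr.2 := by
              have := Finset.mem_filter.mp hrr; exact this.2
            have hpPS : p ∈ PS := hs'sub hp
            have hrrPS : rr ∈ PS := hs'sub hrr'
            by_cases hp2 : p.2 ≤ m.1
            · have hne : p ≠ rr := by
                intro h; rw [h] at hp2; linarith
              rcases hcomp p hpPS rr hrrPS hne with h | h
              · have := (hGood p hp rr hrr' h).1
                rw [hf]; simp only [if_pos hp2]; linarith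
              · exfalso; have := h.2.2; linarith
            · rw [hf]; simp only [if_neg hp2]
              by_cases hne : p = rr
              · subst hne; linarith
              rcases hcomp p hpPS rr hrrPS hne with h | h
              · have := (hGood p hp rr hrr' h).1; linarith
              · have := (hGood rr hrr' p hp h).2.1 (lt_of_le_of_lt (hPrec p hp).2.1 hrr2)
                linarith
          rw [hU]
          split_ifs with h
          · rw [Finset.max'_lt_iff, ]
            intro y hy
            rw [Finset.lt_min'_iff]
            intro z hz
            obtain ⟨p, hp, rfl⟩ := Finset.mem_image.mp hy
            obtain ⟨rr, hrr, rfl⟩ := Finset.mem_image.mp hz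
            exact key p hp rr hrr
          · linarith
        refine ⟨(A + U) / 2, ?_, ?_, ?_, ?_⟩
        · intro q hq
          have h1 : X₀ q ≤ f q := by
            rw [hf]; dsimp only; split_ifs <;> linarith
          have := hAub q hq
          linarith
        · intro q hq hover
          have hqups : q ∈ ups := Finset.mem_filter.mpr ⟨hq, hover⟩
          have := hUlb q hqups
          linarith
        · intro q hq htouch
          constructor
          · intro hR; exact absurd hR (hEx q hq htouch.symm)
          · intro _
            have h1 : f q = X₀ q + 1 := by rw [hf]; simp only [if_pos htouch.symm.le]
            have := hAub q hq
            rw [h1] at this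
            linarith
        · intro q hq hgap
          have h1 : f q = X₀ q + 1 := by rw [hf]; simp only [if_pos hgap.le]
          have := hAub q hq
          rw [h1] at this
          linarith
    obtain ⟨ξ, hmono, hover, htouch, hgap⟩ := hξ
    refine ⟨Function.update X₀ m ξ, ?_⟩
    have hupd : ∀ p, p ≠ m → Function.update X₀ m ξ p = X₀ p := by
      intro p hp; exact Function.update_of_ne hp _ _
    have hupdm : Function.update X₀ m ξ m = ξ := Function.update_self _ _ _
    intro q hq r hr hqr
    by_cases hqm : q = m
    · rw [hqm] at hqr
      exfalso
      by_cases hrm : r = m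
      · exact hqr.1 (hrm ▸ rfl)
      · have hr' : r ∈ s' := Finset.mem_erase.mpr ⟨hrm, hr⟩
        have h2 := hPrec r hr'
        apply hrm
        exact Prod.ext (le_antisymm h2.2.1 hqr.2.1) (le_antisymm h2.2.2 hqr.2.2)
    · have hq' : q ∈ s' := Finset.mem_erase.mpr ⟨hqm, hq⟩
      by_cases hrm : r = m
      · subst hrm
        rw [hupd q hqm, hupdm]
        refine ⟨hmono q hq', fun h => hover q hq' h, fun h => htouch q hq' h,
          fun h => hgap q hq' h⟩
      · have hr' : r ∈ s' := Finset.mem_erase.mpr ⟨hrm, hr⟩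
        rw [hupd q hqm, hupd r hrm]
        exact hGood q hq' r hr' hqr


end StrictMixedAux

open StrictMixedAux in
/-- If a twin-free graph `G` has a strict mixed interval representation (no
assigned interval is strictly contained in another, i.e. the only proper
inclusions are between intervals with the same endpoints), then `G` has a
unit mixed interval representation. -/
theorem strict_mixed_implies_unit_mixed
    [Fintype V] (G : SimpleGraph V) (htf : TwinFree G)
    (I : V → Set ℝ) (a b : V → ℝ)
    (hform : ∀ v, I v = Set.Icc (a v) (b v) ∨ I v = Set.Ico (a v) (b v) ∨
      I v = Set.Ioc (a v) (b v) ∨ I v = Set.Ioo (a v) (b v))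
    (hne : ∀ v, (I v).Nonempty)
    (hadj : ∀ u v : V, u ≠ v → (G.Adj u v ↔ (I u ∩ I v).Nonempty))
    (hstrict : ∀ u v : V, I u ⊂ I v → a u = a v ∧ b u = b v) :
    ∃ J : V → Set ℝ, UnitMixedRep G J := by
  classical
  set lc : V → Prop := fun v => a v ∈ I v with hlcdef
  set rc : V → Prop := fun v => b v ∈ I v with hrcdef
  -- membership characterizations
  have hspec : ∀ v, MemSpec (I v) (a v) (b v) (lc v) (rc v) := by
    intro v
    rcases hform v with h | h | h | h
    · have hab : a v ≤ b v := Set.nonempty_Icc.mp (h ▸ hne v)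
      have hl : lc v := by rw [hlcdef]; dsimp only; rw [h]; exact ⟨le_refl _, hab⟩
      have hr : rc v := by rw [hrcdef]; dsimp only; rw [h]; exact ⟨hab, le_refl _⟩
      rw [h]; exact memSpec_Icc hab hl hr
    · have hab : a v < b v := Set.nonempty_Ico.mp (h ▸ hne v)
      have hl : lc v := by rw [hlcdef]; dsimp only; rw [h]; exact ⟨le_refl _, hab⟩
      have hr : ¬ rc v := by
        rw [hrcdef]; dsimp only; rw [h]; simp [Set.mem_Ico]
      rw [h]; exact memSpec_Ico hl hr
    · have hab : a v < b v := Set.nonempty_Ioc.mp (h ▸ hne v)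
      have hl : ¬ lc v := by
        rw [hlcdef]; dsimp only; rw [h]; simp [Set.mem_Ioc]
      have hr : rc v := by rw [hrcdef]; dsimp only; rw [h]; exact ⟨hab, le_refl _⟩
      rw [h]; exact memSpec_Ioc hl hr
    · have hab : a v < b v := Set.nonempty_Ioo.mp (h ▸ hne v)
      have hl : ¬ lc v := by
        rw [hlcdef]; dsimp only; rw [h]; simp [Set.mem_Ioo]
      have hr : ¬ rc v := by
        rw [hrcdef]; dsimp only; rw [h]; simp [Set.mem_Ioo]
      rw [h]; exact memSpec_Ioo hl hr
  have hnechar : ∀ v, a v < b v ∨ (a v = b v ∧ lc v ∧ rc v) :=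
    fun v => (hspec v).ne_char (hne v)
  have hable : ∀ v, a v ≤ b v := fun v => (hspec v).le (hne v)
  -- injectivity of the representation
  have hInj : ∀ u v, I u = I v → u = v := by
    intro u v hIuv
    by_contra huv
    apply huv
    apply htf
    intro w
    by_cases hwu : w = u
    · subst hwu
      have h1 : G.Adj v w := by
        rw [hadj v w fun h => huv h.symm, ← hIuv, Set.inter_self]
        exact hne w
      simp only [or_true, true_iff]
      exact Or.inl h1
    · by_cases hwv : w = v
      · subst hwv
        have h1 : G.Adj u w := by
          rw [hadj u w fun h => huv h, hIuv, Set.inter_self]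
          exact hne w
        simp only [or_true, iff_true]
        exact Or.inl h1
      · constructor
        · rintro (h | h)
          · exact Or.inl (by rwa [hadj v w fun h' => hwv h'.symm, ← hIuv,
              ← hadj u w fun h' => hwu h'.symm])
          · exact absurd h hwu
        · rintro (h | h)
          · exact Or.inl (by rwa [hadj u w fun h' => hwu h'.symm, hIuv,
              ← hadj v w fun h' => hwv h'.symm])
          · exact absurd h hwv
  -- no crossing pairs
  have S1 : ∀ u v, a u < a v → b v < b u → False := by
    intro u v h1 h2
    have hsub : I v ⊆ I u := by
      intro t ht
      rw [hspec v] at ht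
      rw [hspec u]
      obtain ⟨hl, hr⟩ := ht
      have htav : a v ≤ t := by rcases hl with h | ⟨e, _⟩; exact h.le; exact e.ge
      have htbv : t ≤ b v := by rcases hr with h | ⟨e, _⟩; exact h.le; exact e.le
      exact ⟨Or.inl (by linarith), Or.inl (by linarith)⟩
    have hwit : ((a u + a v) / 2) ∈ I u ∧ ((a u + a v) / 2) ∉ I v := by
      constructor
      · rw [hspec u]
        have := hable v
        exact ⟨Or.inl (by linarith), Or.inl (by linarith)⟩
      · rw [hspec v]
        rintro ⟨hl, -⟩
        rcases hl with h | ⟨e, -⟩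
        · linarith
        · linarith [le_of_eq e]
    have hss : I v ⊂ I u :=
      (Set.ssubset_iff_of_subset hsub).mpr ⟨_, hwit.1, hwit.2⟩
    exact absurd (hstrict v u hss).1 (by intro h; linarith)
  -- same left endpoint, shorter is left-closed and longer is left-open
  have S2 : ∀ u v, a u = a v → b u < b v → lc u ∧ ¬ lc v := by
    intro u v h1 h2
    by_contra hcon
    have hsub : I u ⊆ I v := by
      intro t ht
      rw [hspec u] at ht
      rw [hspec v]
      obtain ⟨hl, hr⟩ := ht
      have htb : t ≤ b u := by rcases hr with h | ⟨e, _⟩; exact h.le; exact e.le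
      refine ⟨?_, Or.inl (by linarith)⟩
      rcases hl with h | ⟨e, hlu⟩
      · exact Or.inl (h1 ▸ h)
      · have hlv : lc v := by
          by_contra hlv
          exact hcon ⟨hlu, hlv⟩
        exact Or.inr ⟨e.trans h1, hlv⟩
    have hwit : ((b u + b v) / 2) ∈ I v ∧ ((b u + b v) / 2) ∉ I u := by
      constructor
      · rw [hspec v]
        have := hable u
        exact ⟨Or.inl (by linarith), Or.inl (by linarith)⟩
      · rw [hspec u]
        rintro ⟨-, hr⟩
        rcases hr with h | ⟨e, -⟩
        · linarith
        · linarith [le_of_eq e]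
    have hss : I u ⊂ I v :=
      (Set.ssubset_iff_of_subset hsub).mpr ⟨_, hwit.1, hwit.2⟩
    exact absurd (hstrict u v hss).2 (by intro h; linarith)
  -- same right endpoint, shorter is right-closed and longer is right-open
  have S3 : ∀ u v, a u < a v → b u = b v → rc v ∧ ¬ rc u := by
    intro u v h1 h2
    by_contra hcon
    have hsub : I v ⊆ I u := by
      intro t ht
      rw [hspec v] at ht
      rw [hspec u]
      obtain ⟨hl, hr⟩ := ht
      have hta : a v ≤ t := by rcases hl with h | ⟨e, _⟩; exact h.le; exact e.ge
      refine ⟨Or.inl (by linarith), ?_⟩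
      rcases hr with h | ⟨e, hrv⟩
      · exact Or.inl (h2 ▸ h)
      · have hru : rc u := by
          by_contra hru
          exact hcon ⟨hrv, hru⟩
        exact Or.inr ⟨e.trans h2.symm, hru⟩
    have hwit : ((a u + a v) / 2) ∈ I u ∧ ((a u + a v) / 2) ∉ I v := by
      constructor
      · rw [hspec u]
        have := hable v
        exact ⟨Or.inl (by linarith), Or.inl (by linarith)⟩
      · rw [hspec v]
        rintro ⟨hl, -⟩
        rcases hl with h | ⟨e, -⟩
        · linarith
        · linarith [le_of_eq e]
    have hss : I v ⊂ I u :=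
      (Set.ssubset_iff_of_subset hsub).mpr ⟨_, hwit.1, hwit.2⟩
    exact absurd (hstrict v u hss).1 (by intro h; linarith)
  -- point intervals
  have hIpt : ∀ u, a u = b u → I u = {a u} := by
    intro u hpt
    ext t
    rw [hspec u]
    simp only [Set.mem_singleton_iff]
    constructor
    · rintro ⟨hl, hr⟩
      have h1 : a u ≤ t := by rcases hl with h | ⟨e, _⟩; exact h.le; exact e.ge
      have h2 : t ≤ b u := by rcases hr with h | ⟨e, _⟩; exact h.le; exact e.le
      linarith
    · intro h
      rcases hnechar u with h' | ⟨-, hl, hr⟩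
      · exact absurd hpt (by intro e; linarith)
      · exact ⟨Or.inr ⟨h, hl⟩, Or.inr ⟨by rw [h, hpt], hr⟩⟩
  -- point intervals are isolated
  have S5 : ∀ u v, a u = b u → v ≠ u → a u ∉ I v := by
    intro u v hpt hvu hmem
    have hsub : I u ⊆ I v := by
      rw [hIpt u hpt]
      exact Set.singleton_subset_iff.mpr hmem
    have hIne : I u ≠ I v := fun h => hvu (hInj u v h).symm
    have hss : I u ⊂ I v := ssubset_of_ne_of_subset (Ne.symm hIne).symm hsub
    obtain ⟨e1, e2⟩ := hstrict u v hss
    have hsub2 : I v ⊆ {a u} := by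
      intro t ht
      rw [hspec v] at ht
      obtain ⟨hl, hr⟩ := ht
      have h1 : a v ≤ t := by rcases hl with h | ⟨e, _⟩; exact h.le; exact e.ge
      have h2 : t ≤ b v := by rcases hr with h | ⟨e, _⟩; exact h.le; exact e.le
      simp only [Set.mem_singleton_iff]
      have := hpt
      rw [← e1] at h1
      rw [← e2] at h2
      linarith
    have : I v = {a u} := Set.Subset.antisymm hsub2 (Set.singleton_subset_iff.mpr hmem)
    exact hIne (by rw [hIpt u hpt, this])
  -- the finite set of regular endpoint pairs
  set PS : Finset (ℝ × ℝ) :=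
    (Finset.univ.image (fun v => (a v, b v))).filter (fun q => q.1 < q.2) with hPSdef
  have hmemPS₁ : ∀ v, a v < b v → (a v, b v) ∈ PS := by
    intro v hv
    rw [hPSdef, Finset.mem_filter]
    exact ⟨Finset.mem_image_of_mem _ (Finset.mem_univ v), hv⟩
  have hmemPS₂ : ∀ q ∈ PS, ∃ v, (a v, b v) = q ∧ a v < b v := by
    intro q hq
    rw [hPSdef, Finset.mem_filter, Finset.mem_image] at hq
    obtain ⟨⟨v, -, hv⟩, hreg⟩ := hq
    refine ⟨v, hv, ?_⟩
    have h1 : a v = q.1 := by rw [← hv]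
    have h2 : b v = q.2 := by rw [← hv]
    rw [h1, h2]; exact hreg
  have hcomp : ∀ q ∈ PS, ∀ r ∈ PS, q ≠ r → Prec q r ∨ Prec r q := by
    intro q hq r hr hqr
    obtain ⟨u, hu, hureg⟩ := hmemPS₂ q hq
    obtain ⟨v, hv, hvreg⟩ := hmemPS₂ r hr
    have hq1 : q.1 = a u := by rw [← hu]
    have hq2 : q.2 = b u := by rw [← hu]
    have hr1 : r.1 = a v := by rw [← hv]
    have hr2 : r.2 = b v := by rw [← hv]
    rcases lt_trichotomy (a u) (a v) with h | h | h
    · left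
      refine ⟨hqr, by rw [hq1, hr1]; exact h.le, ?_⟩
      rw [hq2, hr2]
      rcases le_or_gt (b u) (b v) with h' | h'
      · exact h'
      · exact absurd (S1 u v h h') (fun f => f)
    · rcases lt_trichotomy (b u) (b v) with h' | h' | h'
      · exact Or.inl ⟨hqr, by rw [hq1, hr1, h], by rw [hq2, hr2]; exact h'.le⟩
      · exact absurd (by rw [← hu, ← hv, h, h'] : q = r) hqr
      · exact Or.inr ⟨hqr.symm, by rw [hq1, hr1, h], by rw [hq2, hr2]; exact h'.le⟩
    · right
      refine ⟨hqr.symm, by rw [hq1, hr1]; exact h.le, ?_⟩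
      rw [hq2, hr2]
      rcases le_or_gt (b v) (b u) with h' | h'
      · exact h'
      · exact absurd (S1 v u h h') (fun f => f)
  set Rig : ℝ × ℝ → ℝ × ℝ → Prop := fun q r =>
    (∃ w, (a w, b w) = q ∧ a w < b w ∧ rc w) ∧
    (∃ w, (a w, b w) = r ∧ a w < b w ∧ lc w) with hRigdef
  have hRβ : ∀ q ∈ PS, ∀ r ∈ PS, q.2 = r.2 → q.1 < r.1 → ∀ s', ¬ Rig q s' := by
    intro q hq r hr h2 h1 s' hRig
    obtain ⟨⟨w, hwq, -, hwrc⟩, -⟩ := hRig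
    obtain ⟨w', hw'r, -⟩ := hmemPS₂ r hr
    have e1 : a w = q.1 := by rw [← hwq]
    have e2 : b w = q.2 := by rw [← hwq]
    have e3 : a w' = r.1 := by rw [← hw'r]
    have e4 : b w' = r.2 := by rw [← hw'r]
    have := S3 w w' (by rw [e1, e3]; exact h1) (by rw [e2, e4, h2])
    exact this.2 hwrc
  have hRα : ∀ q ∈ PS, ∀ r ∈ PS, q.1 = r.1 → q.2 < r.2 → ∀ t, ¬ Rig t r := by
    intro q hq r hr h1 h2 t hRig
    obtain ⟨-, ⟨w, hwr, -, hwlc⟩⟩ := hRig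
    obtain ⟨u, huq, -⟩ := hmemPS₂ q hq
    have e1 : a u = q.1 := by rw [← huq]
    have e2 : b u = q.2 := by rw [← huq]
    have e3 : a w = r.1 := by rw [← hwr]
    have e4 : b w = r.2 := by rw [← hwr]
    have := S2 u w (by rw [e1, e3, h1]) (by rw [e2, e4]; exact h2)
    exact this.2 hwlc
  obtain ⟨X, hX⟩ := exists_X PS Rig hcomp hRβ hRα
  -- the new representation
  set M : ℝ := if h : PS.Nonempty then (PS.image X).max' (h.image X) else 0 with hMdef
  have hM : ∀ q ∈ PS, X q ≤ M := by
    intro q hq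
    rw [hMdef, dif_pos ⟨q, hq⟩]
    exact Finset.le_max' _ _ (Finset.mem_image_of_mem X hq)
  set cnt : V → ℕ := fun v =>
    (Finset.univ.filter (fun w => a w = b w ∧ a w < a v)).card with hcntdef
  set x : V → ℝ := fun v =>
    if a v < b v then X (a v, b v) else M + 2 + 2 * (cnt v : ℝ) with hxdef
  have hxreg : ∀ v, a v < b v → x v = X (a v, b v) := by
    intro v hv; rw [hxdef]; exact if_pos hv
  have hxpt : ∀ v, ¬ (a v < b v) → x v = M + 2 + 2 * (cnt v : ℝ) := by
    intro v hv; rw [hxdef]; exact if_neg hv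
  set J : V → Set ℝ := fun v =>
    if lc v then
      (if rc v then Set.Icc (x v) (x v + 1) else Set.Ico (x v) (x v + 1))
    else
      (if rc v then Set.Ioc (x v) (x v + 1) else Set.Ioo (x v) (x v + 1)) with hJdef
  have hJval : ∀ v, J v = if lc v then
      (if rc v then Set.Icc (x v) (x v + 1) else Set.Ico (x v) (x v + 1))
    else
      (if rc v then Set.Ioc (x v) (x v + 1) else Set.Ioo (x v) (x v + 1)) := by
    intro v; rw [hJdef]
  have hJspec : ∀ v, MemSpec (J v) (x v) (x v + 1) (lc v) (rc v) := by
    intro v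
    by_cases hl : lc v <;> by_cases hr : rc v
    · rw [hJval v, if_pos hl, if_pos hr]; exact memSpec_Icc (by linarith) hl hr
    · rw [hJval v, if_pos hl, if_neg hr]; exact memSpec_Ico hl hr
    · rw [hJval v, if_neg hl, if_pos hr]; exact memSpec_Ioc hl hr
    · rw [hJval v, if_neg hl, if_neg hr]; exact memSpec_Ioo hl hr
  have hJform : ∀ v, UnitIntervalAt (J v) (x v) := by
    intro v
    by_cases hl : lc v <;> by_cases hr : rc v
    · rw [hJval v, if_pos hl, if_pos hr]; exact Or.inl rfl
    · rw [hJval v, if_pos hl, if_neg hr]; exact Or.inr (Or.inl rfl)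
    · rw [hJval v, if_neg hl, if_pos hr]; exact Or.inr (Or.inr (Or.inl rfl))
    · rw [hJval v, if_neg hl, if_neg hr]; exact Or.inr (Or.inr (Or.inr rfl))
  have hJne : ∀ v, (J v).Nonempty := by
    intro v
    refine ⟨x v + 1/2, ?_⟩
    rw [hJspec v]
    exact ⟨Or.inl (by linarith), Or.inl (by linarith)⟩
  -- intervals far apart are disjoint
  have hfar : ∀ u v, x u + 1 < x v → ¬ (J u ∩ J v).Nonempty := by
    rintro u v h ⟨t, ht1, ht2⟩
    rw [hJspec u] at ht1
    rw [hJspec v] at ht2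
    have h1 : t ≤ x u + 1 := by
      rcases ht1.2 with h' | ⟨e, _⟩; exact h'.le; exact e.le
    have h2 : x v ≤ t := by
      rcases ht2.1 with h' | ⟨e, _⟩; exact h'.le; exact e.ge
    linarith
  -- the key equivalence for regular ordered pairs
  have keyReg : ∀ u v, u ≠ v → a u ≤ a v → b u ≤ b v → a u < b u → a v < b v →
      ((I u ∩ I v).Nonempty ↔ (J u ∩ J v).Nonempty) := by
    intro u v huv hab1 hab2 hu hv
    rw [inter_nonempty_iff (hspec u) (hspec v) (hne u) (hne v),
        inter_nonempty_iff (hJspec u) (hJspec v) (hJne u) (hJne v)]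
    by_cases hpq : ((a u, b u) : ℝ × ℝ) = (a v, b v)
    · have e1 : a u = a v := congrArg Prod.fst hpq
      have e2 : b u = b v := congrArg Prod.snd hpq
      have hxuv : x u = x v := by rw [hxreg u hu, hxreg v hv, hpq]
      constructor
      · intro _
        exact ⟨Or.inl (by linarith), Or.inl (by linarith)⟩
      · intro _
        exact ⟨Or.inl (by linarith), Or.inl (by linarith)⟩
    · have hpuPS : ((a u, b u) : ℝ × ℝ) ∈ PS := hmemPS₁ u hu
      have hpvPS : ((a v, b v) : ℝ × ℝ) ∈ PS := hmemPS₁ v hv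
      have hPrec : Prec (a u, b u) (a v, b v) := ⟨hpq, hab1, hab2⟩
      obtain ⟨hmono, hov, htch, hgap⟩ := hX (a u, b u) hpuPS (a v, b v) hpvPS hPrec
      have hxu : x u = X (a u, b u) := hxreg u hu
      have hxv : x v = X (a v, b v) := hxreg v hv
      have hL1 : a u < b v := lt_of_le_of_lt hab1 hv
      have hR1 : x u < x v + 1 := by rw [hxu, hxv]; linarith
      have hsecond : (a v < b u ∨ (a v = b u ∧ lc v ∧ rc u)) ↔
          (x v < x u + 1 ∨ (x v = x u + 1 ∧ lc v ∧ rc u)) := by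
        rcases lt_trichotomy (a v) (b u) with hcase | hcase | hcase
        · have := hov hcase
          exact iff_of_true (Or.inl hcase) (Or.inl (by rw [hxu, hxv]; linarith))
        · by_cases hrig : Rig (a u, b u) (a v, b v)
          · have hXeq := (htch hcase).1 hrig
            constructor
            · rintro (h | ⟨-, h2, h3⟩)
              · exact absurd h (by rw [hcase]; exact lt_irrefl _)
              · exact Or.inr ⟨by rw [hxu, hxv, hXeq], h2, h3⟩
            · rintro (h | ⟨-, h2, h3⟩)
              · exact absurd h (by rw [hxu, hxv, hXeq]; exact lt_irrefl _)
              · exact Or.inr ⟨hcase, h2, h3⟩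
          · have hXgt := (htch hcase).2 hrig
            constructor
            · rintro (h | ⟨-, h2, h3⟩)
              · exact absurd h (by rw [hcase]; exact lt_irrefl _)
              · exact absurd (⟨⟨u, rfl, hu, h3⟩, ⟨v, rfl, hv, h2⟩⟩ : Rig (a u, b u) (a v, b v)) hrig
            · rintro (h | ⟨e, -, -⟩)
              · exact absurd h (by rw [hxu, hxv]; linarith)
              · exact absurd e (by rw [hxu, hxv]; intro e'; linarith)
        · have := hgap hcase
          constructor
          · rintro (h | ⟨e, -, -⟩)
            · exact absurd h (by intro h'; linarith)
            · exact absurd e (by intro e'; linarith)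
          · rintro (h | ⟨e, -, -⟩)
            · exact absurd h (by rw [hxu, hxv]; intro h'; linarith)
            · exact absurd e (by rw [hxu, hxv]; intro e'; linarith)
      constructor
      · rintro ⟨-, h2⟩
        exact ⟨Or.inl hR1, hsecond.mp h2⟩
      · rintro ⟨-, h2⟩
        exact ⟨Or.inl hL1, hsecond.mpr h2⟩
  -- point vertices are far from everything
  have hptfar : ∀ u v, u ≠ v → ¬ (a u < b u) → ¬ (J u ∩ J v).Nonempty := by
    intro u v huv hu
    have hueq : a u = b u := le_antisymm (hable u) (not_lt.mp hu)
    by_cases hv : a v < b v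
    · have h1 : x v = X (a v, b v) := hxreg v hv
      have h2 : X (a v, b v) ≤ M := hM _ (hmemPS₁ v hv)
      have h3 : x u = M + 2 + 2 * (cnt u : ℝ) := hxpt u hu
      have h4 : (0 : ℝ) ≤ (cnt u : ℝ) := Nat.cast_nonneg _
      intro hcon
      exact hfar v u (by linarith) (by rwa [Set.inter_comm])
    · -- both points
      have hveq : a v = b v := le_antisymm (hable v) (not_lt.mp hv)
      have hne' : a u ≠ a v := by
        intro e
        apply huv
        apply hInj
        rw [hIpt u hueq, hIpt v hveq, e]
      have hcnt : ∀ w w', a w = b w → a w' = b w' → a w < a w' → cnt w + 1 ≤ cnt w' := by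
        intro w w' hw hw' hlt
        rw [hcntdef]
        dsimp only
        have hsub : insert w (Finset.univ.filter (fun z => a z = b z ∧ a z < a w)) ⊆
            Finset.univ.filter (fun z => a z = b z ∧ a z < a w') := by
          intro z hz
          rcases Finset.mem_insert.mp hz with h | h
          · subst h
            exact Finset.mem_filter.mpr ⟨Finset.mem_univ _, hw, hlt⟩
          · obtain ⟨-, h1, h2⟩ := Finset.mem_filter.mp h
            exact Finset.mem_filter.mpr ⟨Finset.mem_univ _, h1, by linarith⟩
        have hnotmem : w ∉ Finset.univ.filter (fun z => a z = b z ∧ a z < a w) := by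
          intro h
          exact absurd (Finset.mem_filter.mp h).2.2 (lt_irrefl _)
        calc (Finset.univ.filter (fun z => a z = b z ∧ a z < a w)).card + 1
            = (insert w (Finset.univ.filter (fun z => a z = b z ∧ a z < a w))).card := by
              rw [Finset.card_insert_of_notMem hnotmem]
          _ ≤ _ := Finset.card_le_card hsub
      rcases lt_or_gt_of_ne hne' with h | h
      · have := hcnt u v hueq hveq h
        have h3 : x u = M + 2 + 2 * (cnt u : ℝ) := hxpt u hu
        have h4 : x v = M + 2 + 2 * (cnt v : ℝ) := hxpt v hv
        have h5 : (cnt u : ℝ) + 1 ≤ (cnt v : ℝ) := by exact_mod_cast this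
        exact hfar u v (by linarith)
      · have := hcnt v u hveq hueq h
        have h3 : x u = M + 2 + 2 * (cnt u : ℝ) := hxpt u hu
        have h4 : x v = M + 2 + 2 * (cnt v : ℝ) := hxpt v hv
        have h5 : (cnt v : ℝ) + 1 ≤ (cnt u : ℝ) := by exact_mod_cast this
        intro hcon
        exact hfar v u (by linarith) (by rwa [Set.inter_comm])
  -- the main equivalence
  have key : ∀ u v, u ≠ v → ((I u ∩ I v).Nonempty ↔ (J u ∩ J v).Nonempty) := by
    intro u v huv
    by_cases hu : a u < b u
    · by_cases hv : a v < b v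
      · have horder : (a u ≤ a v ∧ b u ≤ b v) ∨ (a v ≤ a u ∧ b v ≤ b u) := by
          rcases lt_trichotomy (a u) (a v) with h | h | h
          · left
            refine ⟨h.le, ?_⟩
            rcases le_or_gt (b u) (b v) with h' | h'
            · exact h'
            · exact absurd (S1 u v h h') (fun f => f)
          · rcases le_total (b u) (b v) with h' | h'
            · exact Or.inl ⟨h.le, h'⟩
            · exact Or.inr ⟨h.ge, h'⟩
          · right
            refine ⟨h.le, ?_⟩
            rcases le_or_gt (b v) (b u) with h' | h'
            · exact h'
            · exact absurd (S1 v u h h') (fun f => f)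
        rcases horder with ⟨h1, h2⟩ | ⟨h1, h2⟩
        · exact keyReg u v huv h1 h2 hu hv
        · rw [Set.inter_comm (I u), Set.inter_comm (J u)]
          exact keyReg v u huv.symm h1 h2 hv hu
      · -- v is a point, isolated
        have hveq : a v = b v := le_antisymm (hable v) (not_lt.mp hv)
        constructor
        · rintro ⟨t, ht1, ht2⟩
          exfalso
          rw [hIpt v hveq] at ht2
          rw [Set.mem_singleton_iff] at ht2
          subst ht2
          exact S5 v u hveq huv ht1
        · intro hcon
          exact absurd (by rwa [Set.inter_comm]) (hptfar v u huv.symm hv)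
    · -- u is a point, isolated
      have hueq : a u = b u := le_antisymm (hable u) (not_lt.mp hu)
      constructor
      · rintro ⟨t, ht1, ht2⟩
        exfalso
        rw [hIpt u hueq] at ht1
        rw [Set.mem_singleton_iff] at ht1
        subst ht1
        exact S5 u v hueq huv.symm ht2
      · intro hcon
        exact absurd hcon (hptfar u v huv hu)
  exact ⟨J, fun v => ⟨x v, hJform v⟩, fun u v huv => (hadj u v huv).trans (key u v huv)⟩
end

section
/- If a twin-free graph G has a unit mixed interval representation, then G contains no induced K_{1,4}. -/
variable {V : Type*}

lemma unitIntervalAt_subset {s : Set ℝ} {x : ℝ} (h : UnitIntervalAt s x) :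
    Set.Ioo x (x + 1) ⊆ s ∧ s ⊆ Set.Icc x (x + 1) := by
  rcases h with h | h | h | h <;> subst h <;>
    exact ⟨by intro p hp; exact ⟨by linarith [hp.1], by linarith [hp.2]⟩,
      by intro p hp; constructor <;> [skip; skip] <;> rcases hp with ⟨h1, h2⟩ <;> linarith⟩

lemma unit_sep {s t : Set ℝ} {x y : ℝ} (hs : UnitIntervalAt s x)
    (ht : UnitIntervalAt t y) (hd : ¬(s ∩ t).Nonempty) :
    x + 1 ≤ y ∨ y + 1 ≤ x := by
  by_contra hc
  push_neg at hc
  obtain ⟨h1, h2⟩ := hc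
  apply hd
  refine ⟨(max x y + min x y + 1) / 2, ?_, ?_⟩
  · apply (unitIntervalAt_subset hs).1
    constructor
    · rcases le_total x y with h | h <;>
        simp [max_eq_right, max_eq_left, min_eq_left, min_eq_right, h] <;> linarith
    · rcases le_total x y with h | h <;>
        simp [max_eq_right, max_eq_left, min_eq_left, min_eq_right, h] <;> linarith
  · apply (unitIntervalAt_subset ht).1
    constructor
    · rcases le_total x y with h | h <;>
        simp [max_eq_right, max_eq_left, min_eq_left, min_eq_right, h] <;> linarith
    · rcases le_total x y with h | h <;>
        simp [max_eq_right, max_eq_left, min_eq_left, min_eq_right, h] <;> linarith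

lemma unit_close {s t : Set ℝ} {x y : ℝ} (hs : UnitIntervalAt s x)
    (ht : UnitIntervalAt t y) (hd : (s ∩ t).Nonempty) :
    x ≤ y + 1 ∧ y ≤ x + 1 := by
  obtain ⟨p, hps, hpt⟩ := hd
  have h1 := (unitIntervalAt_subset hs).2 hps
  have h2 := (unitIntervalAt_subset ht).2 hpt
  exact ⟨by linarith [h1.1, h2.2], by linarith [h2.1, h1.2]⟩

/-- A twin-free unit mixed interval graph contains no induced `K_{1,4}`. -/
theorem unit_mixed_no_induced_K14
    (G : SimpleGraph V) (htf : TwinFree G)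
    (I : V → Set ℝ) (hrep : UnitMixedRep G I) :
    ¬ ∃ c l1 l2 l3 l4 : V, List.Pairwise (· ≠ ·) [c, l1, l2, l3, l4] ∧
      G.Adj c l1 ∧ G.Adj c l2 ∧ G.Adj c l3 ∧ G.Adj c l4 ∧
      ¬G.Adj l1 l2 ∧ ¬G.Adj l1 l3 ∧ ¬G.Adj l1 l4 ∧
      ¬G.Adj l2 l3 ∧ ¬G.Adj l2 l4 ∧ ¬G.Adj l3 l4 := by
  rintro ⟨c, l1, l2, l3, l4, hpw, a1, a2, a3, a4, n12, n13, n14, n23, n24, n34⟩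
  obtain ⟨hI, hadj⟩ := hrep
  simp only [List.pairwise_cons, List.mem_cons, List.not_mem_nil, List.mem_singleton,
    forall_eq_or_imp, forall_eq, List.Pairwise.nil, and_true, List.mem_nil_iff,
    or_false, false_or] at hpw
  obtain ⟨⟨hc1, hc2, hc3, hc4⟩, ⟨h12, h13, h14⟩, ⟨h23, h24⟩, h34, -⟩ := hpw
  obtain ⟨x, hx⟩ := hI c
  obtain ⟨y1, hy1⟩ := hI l1
  obtain ⟨y2, hy2⟩ := hI l2
  obtain ⟨y3, hy3⟩ := hI l3
  obtain ⟨y4, hy4⟩ := hI l4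
  have m1 := unit_close hx hy1 ((hadj c l1 hc1).1 a1)
  have m2 := unit_close hx hy2 ((hadj c l2 hc2).1 a2)
  have m3 := unit_close hx hy3 ((hadj c l3 hc3).1 a3)
  have m4 := unit_close hx hy4 ((hadj c l4 hc4).1 a4)
  have s12 := unit_sep hy1 hy2 (fun h => n12 ((hadj l1 l2 h12).2 h))
  have s13 := unit_sep hy1 hy3 (fun h => n13 ((hadj l1 l3 h13).2 h))
  have s14 := unit_sep hy1 hy4 (fun h => n14 ((hadj l1 l4 h14).2 h))
  have s23 := unit_sep hy2 hy3 (fun h => n23 ((hadj l2 l3 h23).2 h))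
  have s24 := unit_sep hy2 hy4 (fun h => n24 ((hadj l2 l4 h24).2 h))
  have s34 := unit_sep hy3 hy4 (fun h => n34 ((hadj l3 l4 h34).2 h))
  rcases s12 with h | h <;> rcases s13 with h' | h' <;> rcases s14 with h'' | h'' <;>
    rcases s23 with g | g <;> rcases s24 with g' | g' <;> rcases s34 with g'' | g'' <;>
    linarith [m1.1, m1.2, m2.1, m2.2, m3.1, m3.2, m4.1, m4.2]
end

section
/- If a twin-free graph G has a unit mixed interval representation, then G contains no induced copy of K_{2,3}* (the complete bipartite graph K_{2,3} with an edge added between the two vertices of the 2-side). -/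
variable {V : Type*}

section Aux
variable {V : Type*}

lemma unit_subset_Icc {s : Set ℝ} {x : ℝ} (h : UnitIntervalAt s x) :
    s ⊆ Set.Icc x (x + 1) := by
  rcases h with h | h | h | h <;> subst h
  · exact le_refl _
  · exact Set.Ico_subset_Icc_self
  · exact Set.Ioc_subset_Icc_self
  · exact Set.Ioo_subset_Icc_self

lemma unit_supset_Ioo {s : Set ℝ} {x : ℝ} (h : UnitIntervalAt s x) :
    Set.Ioo x (x + 1) ⊆ s := by
  rcases h with h | h | h | h <;> subst h
  · exact Set.Ioo_subset_Icc_self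
  · exact Set.Ioo_subset_Ico_self
  · exact Set.Ioo_subset_Ioc_self
  · exact le_refl _

lemma unit_eq_Icc {s : Set ℝ} {x : ℝ} (h : UnitIntervalAt s x)
    (h1 : x ∈ s) (h2 : x + 1 ∈ s) : s = Set.Icc x (x + 1) := by
  rcases h with h | h | h | h <;> subst h
  · rfl
  · exact absurd h2.2 (lt_irrefl _)
  · exact absurd h1.1 (lt_irrefl _)
  · exact absurd h1.1 (lt_irrefl _)

lemma disj_far {s t : Set ℝ} {a b : ℝ} (hs : UnitIntervalAt s a)
    (ht : UnitIntervalAt t b) (hd : ¬ (s ∩ t).Nonempty) :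
    a + 1 ≤ b ∨ b + 1 ≤ a := by
  by_contra hc
  push_neg at hc
  obtain ⟨h1, h2⟩ := hc
  exact hd ⟨(a + b + 1) / 2,
    unit_supset_Ioo hs ⟨by linarith, by linarith⟩,
    unit_supset_Ioo ht ⟨by linarith, by linarith⟩⟩

lemma adj_close {s t : Set ℝ} {a b : ℝ} (hs : UnitIntervalAt s a)
    (ht : UnitIntervalAt t b) (hd : (s ∩ t).Nonempty) :
    a ≤ b + 1 ∧ b ≤ a + 1 := by
  obtain ⟨y, hy1, hy2⟩ := hd
  have h1 := unit_subset_Icc hs hy1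
  have h2 := unit_subset_Icc ht hy2
  exact ⟨by linarith [h1.1, h1.2, h2.1, h2.2], by linarith [h1.1, h1.2, h2.1, h2.2]⟩

lemma point_left {s t : Set ℝ} {a b : ℝ} (hs : UnitIntervalAt s a)
    (ht : UnitIntervalAt t b) (hd : (s ∩ t).Nonempty) (hab : b = a - 1) :
    a ∈ s := by
  obtain ⟨y, hy1, hy2⟩ := hd
  have h1 := unit_subset_Icc hs hy1
  have h2 := unit_subset_Icc ht hy2
  have : y = a := by
    subst hab
    linarith [h1.1, h1.2, h2.1, h2.2]
  rwa [this] at hy1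

lemma point_right {s t : Set ℝ} {a b : ℝ} (hs : UnitIntervalAt s a)
    (ht : UnitIntervalAt t b) (hd : (s ∩ t).Nonempty) (hab : b = a + 1) :
    a + 1 ∈ s := by
  obtain ⟨y, hy1, hy2⟩ := hd
  have h1 := unit_subset_Icc hs hy1
  have h2 := unit_subset_Icc ht hy2
  have : y = a + 1 := by
    subst hab
    linarith [h1.1, h1.2, h2.1, h2.2]
  rwa [this] at hy1

lemma arith_key {a b c p q : ℝ}
    (hab : a + 1 ≤ b ∨ b + 1 ≤ a) (hac : a + 1 ≤ c ∨ c + 1 ≤ a)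
    (hbc : b + 1 ≤ c ∨ c + 1 ≤ b)
    (hpa1 : p ≤ a + 1) (hpa2 : a ≤ p + 1)
    (hpb1 : p ≤ b + 1) (hpb2 : b ≤ p + 1)
    (hpc1 : p ≤ c + 1) (hpc2 : c ≤ p + 1)
    (hqa1 : q ≤ a + 1) (hqa2 : a ≤ q + 1)
    (hqb1 : q ≤ b + 1) (hqb2 : b ≤ q + 1)
    (hqc1 : q ≤ c + 1) (hqc2 : c ≤ q + 1) :
    p = q ∧ (a = p - 1 ∨ b = p - 1 ∨ c = p - 1) ∧
      (a = p + 1 ∨ b = p + 1 ∨ c = p + 1) := by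
  rcases hab with h1 | h1 <;> rcases hac with h2 | h2 <;> rcases hbc with h3 | h3 <;>
    refine ⟨by linarith, ?_, ?_⟩ <;>
    first
      | (left; linarith)
      | (right; left; linarith)
      | (right; right; linarith)

end Aux

/-- A twin-free unit mixed interval graph contains no induced `K_{2,3}*`
(`K_{2,3}` plus an edge between the two vertices of the 2-side). -/
theorem unit_mixed_no_induced_K23star
    (G : SimpleGraph V) (htf : TwinFree G)
    (I : V → Set ℝ) (hrep : UnitMixedRep G I) :
    ¬ ∃ p q r s t : V, List.Pairwise (· ≠ ·) [p, q, r, s, t] ∧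
      G.Adj p q ∧ G.Adj p r ∧ G.Adj p s ∧ G.Adj p t ∧
      G.Adj q r ∧ G.Adj q s ∧ G.Adj q t ∧
      ¬G.Adj r s ∧ ¬G.Adj r t ∧ ¬G.Adj s t := by
  rintro ⟨p, q, r, s, t, hne, hpq, hpr, hps, hpt, hqr, hqs, hqt, hrs, hrt, hst⟩
  simp only [List.pairwise_cons, List.mem_cons, List.mem_singleton,
    List.not_mem_nil] at hne
  obtain ⟨hne1, hne2, hne3⟩ := hne
  have hpq' : p ≠ q := hne1 q (by simp)
  have hpr' : p ≠ r := hne1 r (by simp)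
  have hps' : p ≠ s := hne1 s (by simp)
  have hpt' : p ≠ t := hne1 t (by simp)
  have hqr' : q ≠ r := hne2 r (by simp)
  have hqs' : q ≠ s := hne2 s (by simp)
  have hqt' : q ≠ t := hne2 t (by simp)
  have hrs' : r ≠ s := by
    rcases hne3 with ⟨h3, _⟩; exact h3 s (by simp)
  have hrt' : r ≠ t := by
    rcases hne3 with ⟨h3, _⟩; exact h3 t (by simp)
  have hst' : s ≠ t := by
    rcases hne3 with ⟨_, h4, _⟩; exact h4 t (by simp)
  obtain ⟨hunit, hadj⟩ := hrep
  choose x hx using hunit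
  -- nonadjacency gives distance ≥ 1
  have hdrs := disj_far (hx r) (hx s) (fun h => hrs ((hadj r s hrs').2 h))
  have hdrt := disj_far (hx r) (hx t) (fun h => hrt ((hadj r t hrt').2 h))
  have hdst := disj_far (hx s) (hx t) (fun h => hst ((hadj s t hst').2 h))
  -- adjacency gives distance ≤ 1
  have hipr := (hadj p r hpr').1 hpr
  have hips := (hadj p s hps').1 hps
  have hipt := (hadj p t hpt').1 hpt
  have hiqr := (hadj q r hqr').1 hqr
  have hiqs := (hadj q s hqs').1 hqs
  have hiqt := (hadj q t hqt').1 hqt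
  have hapr := adj_close (hx p) (hx r) hipr
  have haps := adj_close (hx p) (hx s) hips
  have hapt := adj_close (hx p) (hx t) hipt
  have haqr := adj_close (hx q) (hx r) hiqr
  have haqs := adj_close (hx q) (hx s) hiqs
  have haqt := adj_close (hx q) (hx t) hiqt
  obtain ⟨hxpq, hmin, hmax⟩ := arith_key hdrs hdrt hdst
    hapr.1 hapr.2 haps.1 haps.2 hapt.1 hapt.2
    haqr.1 haqr.2 haqs.1 haqs.2 haqt.1 haqt.2
  -- I p contains both of its endpoints, hence is closed
  have hpl : x p ∈ I p := by
    rcases hmin with h | h | h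
    · exact point_left (hx p) (hx r) hipr (by linarith)
    · exact point_left (hx p) (hx s) hips (by linarith)
    · exact point_left (hx p) (hx t) hipt (by linarith)
  have hpr2 : x p + 1 ∈ I p := by
    rcases hmax with h | h | h
    · exact point_right (hx p) (hx r) hipr (by linarith)
    · exact point_right (hx p) (hx s) hips (by linarith)
    · exact point_right (hx p) (hx t) hipt (by linarith)
  have hql : x q ∈ I q := by
    rcases hmin with h | h | h
    · exact point_left (hx q) (hx r) hiqr (by linarith)
    · exact point_left (hx q) (hx s) hiqs (by linarith)
    · exact point_left (hx q) (hx t) hiqt (by linarith)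
  have hqr2 : x q + 1 ∈ I q := by
    rcases hmax with h | h | h
    · exact point_right (hx q) (hx r) hiqr (by linarith)
    · exact point_right (hx q) (hx s) hiqs (by linarith)
    · exact point_right (hx q) (hx t) hiqt (by linarith)
  have hIp : I p = Set.Icc (x p) (x p + 1) := unit_eq_Icc (hx p) hpl hpr2
  have hIq : I q = Set.Icc (x q) (x q + 1) := unit_eq_Icc (hx q) hql hqr2
  have hIpq : I p = I q := by rw [hIp, hIq, hxpq]
  -- p and q are twins
  apply hpq' (htf p q ?_)
  intro w
  by_cases hwp : w = p
  · subst hwp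
    exact ⟨fun _ => Or.inl hpq.symm, fun _ => Or.inr rfl⟩
  by_cases hwq : w = q
  · subst hwq
    exact ⟨fun _ => Or.inr rfl, fun _ => Or.inl hpq⟩
  · constructor
    · rintro (h | h)
      · left
        exact (hadj q w (Ne.symm hwq)).2 (hIpq ▸ (hadj p w (Ne.symm hwp)).1 h)
      · exact absurd h hwp
    · rintro (h | h)
      · left
        exact (hadj p w (Ne.symm hwp)).2 (hIpq ▸ (hadj q w (Ne.symm hwq)).1 h)
      · exact absurd h hwq
end
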